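/- arXiv:1902.10468 — 14 statements merged into one kernel-verified Lean document; each statement's English description precedes it below -/
import Mathlib

section
/- Let K be a field, let t : ℕ → ℕ → K satisfy t(i,i) = 1 for all i and t(i,j) = 0 whenever j > i, and let M : ℕ → K satisfy M(n) ≠ 0 for all n together with the relations ∑_{j=0}^{n} (-1)^{n-j} t(n,j) M(j) = (if n = 0 then 1 else 0) for every n ≥ 0. Then for every n ≥ 0 the determinant of the n×n matrix with entries t(i+1, j), 0 ≤ i, j ≤ n-1, equals M(n). -/
/-!
Let `T = (t i j)_{0 ≤ i, j ≤ n}`, a lower unitriangular matrix, so `det T = 1`. Multiplying the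
`i`-th relation by `(-1)^i` shows that `T` sends the vector `y j = (-1)^j M j` to the first unit
vector `e₀`. By Cramer's rule, `y n` is the determinant of `T` with its last column replaced by
`e₀`, and expanding that along the last column leaves `(-1)^n` times the minor obtained by deleting
row `0` and column `n`, which is the matrix `(t (i+1) j)_{0 ≤ i, j < n}`.
-/

open Finset Matrix

namespace Matrix

variable {R : Type*} [CommRing R]

theorem cramer_mulVec {ι : Type*} [Fintype ι] [DecidableEq ι] (A : Matrix ι ι R) (y : ι → R) :
    cramer A (A *ᵥ y) = A.det • y := by
  rw [cramer_eq_adjugate_mulVec, mulVec_mulVec, adjugate_mul, smul_mulVec, one_mulVec]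

theorem det_updateCol_last_single_zero {n : ℕ} (A : Matrix (Fin (n + 1)) (Fin (n + 1)) R) :
    (A.updateCol (Fin.last n) (Pi.single 0 1)).det
      = (-1) ^ n * (A.submatrix Fin.succ Fin.castSucc).det := by
  rw [det_succ_column _ (Fin.last n), Fintype.sum_eq_single 0]
  · have hminor : (A.updateCol (Fin.last n) (Pi.single 0 1)).submatrix Fin.succ Fin.castSucc
        = A.submatrix Fin.succ Fin.castSucc := by
      ext i j
      simp [(Fin.castSucc_lt_last j).ne]
    simp [hminor]
  · intro i hi
    simp [Pi.single_eq_of_ne hi]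

end Matrix

section AlternatingInverse

variable {R : Type*} [CommRing R] {t : ℕ → ℕ → R} {M : ℕ → R}

theorem det_of_unitriangular (ht_diag : ∀ i, t i i = 1) (ht_tri : ∀ i j, i < j → t i j = 0)
    (n : ℕ) : (of fun i j : Fin n => t i j).det = 1 := by
  rw [det_of_isLowerTriangular (of fun i j : Fin n => t i j) fun i j => ht_tri i j]
  simp [ht_diag]

theorem sum_mul_neg_one_pow_mul_eq_ite (ht_tri : ∀ i j, i < j → t i j = 0)
    (hrel : ∀ n, ∑ j ∈ range (n + 1), (-1 : R) ^ (n - j) * t n j * M j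
      = if n = 0 then 1 else 0)
    {i N : ℕ} (hiN : i ≤ N) :
    ∑ j ∈ range (N + 1), t i j * ((-1) ^ j * M j) = if i = 0 then 1 else 0 := by
  calc ∑ j ∈ range (N + 1), t i j * ((-1) ^ j * M j)
      = ∑ j ∈ range (i + 1), t i j * ((-1) ^ j * M j) := by
        refine (sum_subset (range_subset_range.2 (by omega)) fun j _ hj => ?_).symm
        rw [ht_tri i j (by simpa using hj), zero_mul]
    _ = ∑ j ∈ range (i + 1), (-1) ^ i * ((-1) ^ (i - j) * t i j * M j) := by
        refine sum_congr rfl fun j hj => ?_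
        rw [mem_range] at hj
        have hsign : (-1 : R) ^ j = (-1) ^ i * (-1) ^ (i - j) := by
          rw [← pow_add, show i + (i - j) = j + 2 * (i - j) by omega, pow_add, pow_mul, neg_one_sq,
            one_pow, mul_one]
        rw [hsign]
        ring
    _ = if i = 0 then 1 else 0 := by
        rw [← mul_sum, hrel]
        split_ifs with hi <;> simp [hi]

theorem mulVec_alternating_eq_single_zero (ht_tri : ∀ i j, i < j → t i j = 0)
    (hrel : ∀ n, ∑ j ∈ range (n + 1), (-1 : R) ^ (n - j) * t n j * M j
      = if n = 0 then 1 else 0) (n : ℕ) :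
    (of fun i j : Fin (n + 1) => t i j) *ᵥ (fun j => (-1) ^ (j : ℕ) * M j)
      = Pi.single 0 1 := by
  funext i
  rw [mulVec, dotProduct]
  simp only [of_apply]
  rw [Fin.sum_univ_eq_sum_range (fun j => t i j * ((-1) ^ j * M j)),
    sum_mul_neg_one_pow_mul_eq_ite ht_tri hrel (Nat.lt_succ_iff.1 i.isLt)]
  rcases Fin.eq_zero_or_eq_succ i with rfl | ⟨k, rfl⟩ <;> simp

end AlternatingInverse

theorem stmt_0_general (K : Type*) [Field K] (t : ℕ → ℕ → K) (M : ℕ → K)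
    (ht_diag : ∀ i, t i i = 1)
    (ht_tri : ∀ i j, i < j → t i j = 0)
    (hrel : ∀ n, ∑ j ∈ Finset.range (n + 1), (-1 : K) ^ (n - j) * t n j * M j
      = if n = 0 then 1 else 0) :
    ∀ n : ℕ, Matrix.det (Matrix.of fun i j : Fin n => t ((i : ℕ) + 1) (j : ℕ)) = M n := by
  intro n
  set T : Matrix (Fin (n + 1)) (Fin (n + 1)) K := of fun i j => t i j
  have hcramer := congrFun (cramer_mulVec T fun j => (-1) ^ (j : ℕ) * M j) (Fin.last n)
  rw [mulVec_alternating_eq_single_zero ht_tri hrel, cramer_apply,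
    det_updateCol_last_single_zero, det_of_unitriangular ht_diag ht_tri, one_smul] at hcramer
  exact mul_left_cancel₀ (pow_ne_zero n (neg_ne_zero.2 one_ne_zero)) hcramer

theorem stmt_0 (K : Type*) [Field K] (t : ℕ → ℕ → K) (M : ℕ → K)
    (ht_diag : ∀ i, t i i = 1)
    (ht_tri : ∀ i j, i < j → t i j = 0)
    (hM : ∀ n, M n ≠ 0)
    (hrel : ∀ n, ∑ j ∈ Finset.range (n + 1), (-1 : K) ^ (n - j) * t n j * M j
      = if n = 0 then 1 else 0) :
    ∀ n : ℕ, Matrix.det (Matrix.of fun i j : Fin n => t ((i : ℕ) + 1) (j : ℕ)) = M n :=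
  stmt_0_general K t M ht_diag ht_tri hrel
end

section
/- For every integer n ≥ 0, ∑_{j=0}^{n} (-1)^{n-j} binom(n+j, n-j) C_j = (if n = 0 then 1 else 0). -/
/-!
The summand `t j` is hypergeometric in `j`, and Gosper's algorithm finds the antidifference:
`n (n + 1) ∑_{j < m} t j = -m (m + 1) t m` for `m ≤ n`. Taking `m = n` and adding `t n` kills the
sum when `n > 0`. The antidifference is checked by induction from the term ratio
`(m + 1) (m + 2) t (m + 1) = -(n - m) (n + m + 1) t m`.
-/

open Finset

theorem add_two_mul_catalan_succ (m : ℕ) :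
    (m + 2) * catalan (m + 1) = 2 * (2 * m + 1) * catalan m := by
  refine Nat.eq_of_mul_eq_mul_left m.succ_pos ?_
  calc (m + 1) * ((m + 2) * catalan (m + 1))
      = (m + 1) * (m + 1).centralBinom := by rw [← succ_mul_catalan_eq_centralBinom]
    _ = 2 * (2 * m + 1) * m.centralBinom := Nat.succ_mul_centralBinom_succ m
    _ = (m + 1) * (2 * (2 * m + 1) * catalan m) := by
      rw [← succ_mul_catalan_eq_centralBinom]; ring

theorem Nat.add_two_mul_add_one_mul_choose (a k : ℕ) :
    (a + 2) * (a + 1) * (a + k + 2).choose k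
      = (a + k + 2) * (k + 1) * (a + k + 1).choose (k + 1) := by
  have h₁ := Nat.choose_mul_succ_eq (a + k + 1) k
  have h₂ := Nat.choose_succ_right_eq (a + k + 1) k
  rw [show a + k + 1 + 1 - k = a + 2 by omega] at h₁
  rw [show a + k + 1 - k = a + 1 by omega] at h₂
  calc (a + 2) * (a + 1) * (a + k + 2).choose k
      = (a + 1) * ((a + k + 1 + 1).choose k * (a + 2)) := by ring
    _ = (a + k + 2) * ((a + k + 1).choose k * (a + 1)) := by rw [← h₁]; ring
    _ = (a + k + 2) * (k + 1) * (a + k + 1).choose (k + 1) := by rw [← h₂]; ring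

def catalanChooseTerm (n j : ℕ) : ℤ :=
  (-1 : ℤ) ^ (n - j) * ((n + j).choose (n - j) : ℤ) * (catalan j : ℤ)

theorem catalanChooseTerm_succ {n m : ℕ} (hm : m < n) :
    ((m : ℤ) + 1) * (m + 2) * catalanChooseTerm n (m + 1)
      = -(((n : ℤ) - m) * (n + m + 1)) * catalanChooseTerm n m := by
  obtain ⟨k, rfl⟩ : ∃ k, n = m + k + 1 := ⟨n - m - 1, by omega⟩
  have key : (m + 1) * (m + 2) * (2 * m + k + 2).choose k * catalan (m + 1)
      = (k + 1) * (2 * m + k + 2) * (2 * m + k + 1).choose (k + 1) * catalan m := by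
    calc (m + 1) * (m + 2) * (2 * m + k + 2).choose k * catalan (m + 1)
        = (m + 1) * (2 * m + k + 2).choose k * ((m + 2) * catalan (m + 1)) := by ring
      _ = (2 * m + 2) * (2 * m + 1) * (2 * m + k + 2).choose k * catalan m := by
        rw [add_two_mul_catalan_succ]; ring
      _ = (k + 1) * (2 * m + k + 2) * (2 * m + k + 1).choose (k + 1) * catalan m := by
        rw [Nat.add_two_mul_add_one_mul_choose]; ring
  unfold catalanChooseTerm
  rw [show m + k + 1 - (m + 1) = k by omega, show m + k + 1 - m = k + 1 by omega,
    show m + k + 1 + (m + 1) = 2 * m + k + 2 by omega,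
    show m + k + 1 + m = 2 * m + k + 1 by omega]
  have key' := congrArg (fun x : ℕ => (x : ℤ)) key
  push_cast at key' ⊢
  linear_combination (-1 : ℤ) ^ k * key'

theorem mul_sum_range_catalanChooseTerm {n m : ℕ} (hm : m ≤ n) :
    ((n : ℤ) * (n + 1)) * ∑ j ∈ range m, catalanChooseTerm n j
      = -((m : ℤ) * (m + 1)) * catalanChooseTerm n m := by
  induction m with
  | zero => simp
  | succ m ih =>
    rw [sum_range_succ, mul_add, ih (by omega)]
    push_cast
    linear_combination catalanChooseTerm_succ (n := n) (m := m) (by omega)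

theorem stmt_1 (n : ℕ) :
    ∑ j ∈ Finset.range (n + 1),
        (-1 : ℤ) ^ (n - j) * (Nat.choose (n + j) (n - j) : ℤ) * (catalan j : ℤ)
      = if n = 0 then 1 else 0 := by
  change ∑ j ∈ range (n + 1), catalanChooseTerm n j = _
  rcases Nat.eq_zero_or_pos n with rfl | hn
  · simp [catalanChooseTerm]
  · have hsum := mul_sum_range_catalanChooseTerm (le_refl n)
    have hne : ((n : ℤ) * (n + 1)) ≠ 0 := by positivity
    rw [if_neg hn.ne', sum_range_succ]
    exact (mul_eq_zero.mp (by linear_combination hsum)).resolve_left hne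
end

section
/- For every integer n ≥ 0, the determinant of the n×n integer matrix with entries binom(i+j+1, 2j), 0 ≤ i, j ≤ n-1, equals the Catalan number C_n. (Note binom(i+j+1, 2j) = binom(i+j+1, i-j+1) when i-j+1 ≥ 0, and binom(i+j+1, 2j) = 0 when j > i+1.) -/
open Finset
set_option maxRecDepth 4000

/-- The inverse-matrix coefficients: `(-1)^(i+m) * (C(2i, i+m) - C(2i, i+m+1))`. -/
def bcoef (i m : ℕ) : ℤ :=
  (-1) ^ (i + m) * (((2 * i).choose (i + m) : ℤ) - ((2 * i).choose (i + m + 1) : ℤ))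

lemma bcoef_eq_zero {i m : ℕ} (h : i < m) : bcoef i m = 0 := by
  unfold bcoef
  rw [Nat.choose_eq_zero_of_lt (by omega), Nat.choose_eq_zero_of_lt (by omega)]
  simp

lemma bcoef_def (i m : ℕ) : bcoef i m =
    (-1) ^ (i + m) * (((2 * i).choose (i + m) : ℤ) - ((2 * i).choose (i + m + 1) : ℤ)) := rfl

lemma bcoef00 : bcoef 0 0 = 1 := by simp [bcoef]

lemma choose_two_step (N s : ℕ) :
    ((N + 2).choose (s + 2) : ℤ) = N.choose s + 2 * N.choose (s + 1) + N.choose (s + 2) := by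
  have h1 : (N + 2).choose (s + 2) = (N+1).choose (s+1) + (N+1).choose (s+2) :=
    Nat.choose_succ_succ' (N+1) (s+1)
  have h2 : (N + 1).choose (s + 1) = N.choose s + N.choose (s+1) := Nat.choose_succ_succ' N s
  have h3 : (N + 1).choose (s + 2) = N.choose (s+1) + N.choose (s+2) :=
    Nat.choose_succ_succ' N (s+1)
  push_cast [h1, h2, h3]; ring

lemma brec (t m : ℕ) :
    bcoef (t + 1) (m + 1) = bcoef t m + bcoef t (m + 2) - 2 * bcoef t (m + 1) := by
  unfold bcoef
  simp only [show 2*(t+1) = 2*t+2 from by ring, show t+1+(m+1) = t+m+2 from by ring,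
    show t+m+2+1 = t+m+3 from by ring, show t+(m+2) = t+m+2 from by ring,
    show t+(m+1) = t+m+1 from by ring, show t+m+1+1 = t+m+2 from by ring,
    show t+m+2+1 = t+m+3 from by ring]
  rw [choose_two_step (2*t) (t+m), show t+m+3 = (t+m+1)+2 from by ring,
    choose_two_step (2*t) (t+m+1)]
  rw [show (-1 : ℤ) ^ (t+m+2) = (-1)^(t+m) from by rw [pow_add]; ring,
    show (-1 : ℤ) ^ (t+m+1) = -(-1)^(t+m) from by rw [pow_add]; ring]
  simp only [show (t+m+1)+1 = t+m+2 from by ring, show (t+m+1)+2 = t+m+3 from by ring]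
  ring

lemma b0rec (t : ℕ) : bcoef (t + 1) 0 = bcoef t 1 - bcoef t 0 := by
  unfold bcoef
  simp only [show 2*(t+1) = 2*t+2 from by ring, show t+1+0 = t+1 from by ring,
    show t+1+1 = t+2 from by ring, show t+0 = t from by ring, show t+0+1 = t+1 from by ring,
    show t+1+0+1 = t+2 from by ring]
  have h1 : ((2 * t + 2).choose (t + 1) : ℤ) = (2*t+1).choose t + (2*t+1).choose (t+1) := by
    have hn : (2*t+2).choose (t+1) = (2*t+1).choose t + (2*t+1).choose (t+1) :=
      Nat.choose_succ_succ' (2*t+1) t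
    exact_mod_cast hn
  have h2 : ((2 * t + 2).choose (t + 2) : ℤ) = (2*t+1).choose (t+1) + (2*t+1).choose (t+2) := by
    have hn : (2*t+2).choose (t+2) = (2*t+1).choose (t+1) + (2*t+1).choose (t+2) :=
      Nat.choose_succ_succ' (2*t+1) (t+1)
    exact_mod_cast hn
  have hsym : ((2 * t + 1).choose t : ℤ) = (2 * t + 1).choose (t + 1) := by
    exact_mod_cast (Nat.choose_symm_half t).symm
  have h3 : ((2*t+1).choose (t+1) : ℤ) = (2*t).choose t + (2*t).choose (t+1) := by
    exact_mod_cast Nat.choose_succ_succ' (2*t) t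
  have h4 : ((2*t+1).choose (t+2) : ℤ) = (2*t).choose (t+1) + (2*t).choose (t+2) := by
    have hn : (2*t+1).choose (t+2) = (2*t).choose (t+1) + (2*t).choose (t+2) :=
      Nat.choose_succ_succ' (2*t) (t+1)
    exact_mod_cast hn
  rw [h1, h2, hsym, h3, h4, show (-1 : ℤ) ^ (t+1) = -(-1)^t from by rw [pow_add]; ring]
  ring

lemma psum (t : ℕ) : ∀ k : ℕ, ∑ m ∈ range (k + 1), bcoef (t + 1) m =
    (-1) ^ (t + 1 + k) * (((2 * t + 1).choose (t + 1 + k) : ℤ) - ((2 * t + 1).choose (t + k + 2) : ℤ)) := by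
  intro k
  induction k with
  | zero =>
    rw [Finset.sum_range_one, bcoef_def]
    simp only [show 2*(t+1) = 2*t+2 from by ring, show t+1+0 = t+1 from by ring,
      show t+1+0+1 = t+2 from by ring, show t+0+2 = t+2 from by ring]
    have h1 : ((2 * t + 2).choose (t + 1) : ℤ) = (2*t+1).choose t + (2*t+1).choose (t+1) := by
      have hn : (2*t+2).choose (t+1) = (2*t+1).choose t + (2*t+1).choose (t+1) :=
        Nat.choose_succ_succ' (2*t+1) t
      exact_mod_cast hn
    have h2 : ((2 * t + 2).choose (t + 2) : ℤ) = (2*t+1).choose (t+1) + (2*t+1).choose (t+2) := by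
      have hn : (2*t+2).choose (t+2) = (2*t+1).choose (t+1) + (2*t+1).choose (t+2) :=
        Nat.choose_succ_succ' (2*t+1) (t+1)
      exact_mod_cast hn
    have hsym : ((2 * t + 1).choose t : ℤ) = (2 * t + 1).choose (t + 1) := by
      exact_mod_cast (Nat.choose_symm_half t).symm
    rw [h1, h2, hsym]
    ring
  | succ k ih =>
    rw [Finset.sum_range_succ, ih, bcoef_def]
    simp only [show 2*(t+1) = 2*t+2 from by ring, show t+1+(k+1) = t+k+2 from by ring,
      show t+k+2+1 = t+k+3 from by ring]
    have h1 : ((2 * t + 2).choose (t + k + 2) : ℤ) = (2*t+1).choose (t+k+1) + (2*t+1).choose (t+k+2) := by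
      have hn : (2*t+2).choose (t+k+2) = (2*t+1).choose (t+k+1) + (2*t+1).choose (t+k+2) :=
        Nat.choose_succ_succ' (2*t+1) (t+k+1)
      exact_mod_cast hn
    have h2 : ((2 * t + 2).choose (t + k + 3) : ℤ) = (2*t+1).choose (t+k+2) + (2*t+1).choose (t+k+3) := by
      have hn : (2*t+2).choose (t+k+3) = (2*t+1).choose (t+k+2) + (2*t+1).choose (t+k+3) :=
        Nat.choose_succ_succ' (2*t+1) (t+k+2)
      exact_mod_cast hn
    rw [h1, h2]
    simp only [show t+1+k = t+k+1 from by ring, show t+(k+1)+2 = t+k+3 from by ring]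
    rw [show (-1 : ℤ) ^ (t+k+2) = (-1)^(t+k+1) * (-1) from by rw [pow_succ]]
    ring

/-- Summation by parts step: the heart of the induction on `j`. -/
lemma sumstep (t : ℕ) (g : ℕ → ℤ) :
    ∑ m ∈ range (t + 2), bcoef (t + 1) m * g (m + 1) =
      (∑ m ∈ range (t + 1), bcoef t m * (g (m + 2) - 2 * g (m + 1) + g m))
        + bcoef t 0 * (g 1 - g 0) := by
  have hz1 : bcoef t (t + 1) = 0 := bcoef_eq_zero (by omega)
  have hz2 : bcoef t (t + 2) = 0 := bcoef_eq_zero (by omega)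
  have hS1 : ∑ m ∈ range (t + 1), bcoef t (m + 1) * g (m + 2) =
      (∑ m ∈ range (t + 1), bcoef t m * g (m + 1)) - bcoef t 0 * g 1 := by
    have h0 : ∑ m ∈ range (t + 2), bcoef t m * g (m + 1) =
        (∑ m ∈ range (t + 1), bcoef t (m + 1) * g (m + 2)) + bcoef t 0 * g 1 :=
      Finset.sum_range_succ' (fun m => bcoef t m * g (m + 1)) (t + 1)
    have h1 : ∑ m ∈ range (t + 2), bcoef t m * g (m + 1) =
        (∑ m ∈ range (t + 1), bcoef t m * g (m + 1)) + bcoef t (t + 1) * g (t + 2) :=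
      Finset.sum_range_succ (fun m => bcoef t m * g (m + 1)) (t + 1)
    rw [hz1, zero_mul, add_zero] at h1
    rw [h1] at h0
    linarith
  have hS2 : ∑ m ∈ range (t + 1), bcoef t (m + 2) * g (m + 2) =
      (∑ m ∈ range (t + 1), bcoef t m * g m) - bcoef t 0 * g 0 - bcoef t 1 * g 1 := by
    have hA1 : ∑ m ∈ range (t + 3), bcoef t m * g m =
        (∑ m ∈ range (t + 2), bcoef t m * g m) + bcoef t (t + 2) * g (t + 2) :=
      Finset.sum_range_succ (fun m => bcoef t m * g m) (t + 2)
    have hA2 : ∑ m ∈ range (t + 2), bcoef t m * g m =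
        (∑ m ∈ range (t + 1), bcoef t m * g m) + bcoef t (t + 1) * g (t + 1) :=
      Finset.sum_range_succ (fun m => bcoef t m * g m) (t + 1)
    rw [hz2, zero_mul, add_zero] at hA1
    rw [hz1, zero_mul, add_zero] at hA2
    rw [hA2] at hA1
    have hB : ∑ m ∈ range (t + 3), bcoef t m * g m =
        (∑ m ∈ range (t + 2), bcoef t (m + 1) * g (m + 1)) + bcoef t 0 * g 0 :=
      Finset.sum_range_succ' (fun m => bcoef t m * g m) (t + 2)
    have hC : ∑ m ∈ range (t + 2), bcoef t (m + 1) * g (m + 1) =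
        (∑ m ∈ range (t + 1), bcoef t (m + 2) * g (m + 2)) + bcoef t 1 * g 1 :=
      Finset.sum_range_succ' (fun m => bcoef t (m + 1) * g (m + 1)) (t + 1)
    rw [hC] at hB
    rw [hA1] at hB
    linarith
  have main : ∑ m ∈ range (t + 2), bcoef (t + 1) m * g (m + 1) =
      (∑ m ∈ range (t + 1), bcoef (t + 1) (m + 1) * g (m + 2)) + bcoef (t + 1) 0 * g 1 :=
    Finset.sum_range_succ' (fun m => bcoef (t + 1) m * g (m + 1)) (t + 1)
  rw [main, b0rec]
  have e : ∑ m ∈ range (t + 1), bcoef (t + 1) (m + 1) * g (m + 2) =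
      ∑ m ∈ range (t + 1),
        (bcoef t m * g (m + 2) + bcoef t (m + 2) * g (m + 2)
          - 2 * (bcoef t (m + 1) * g (m + 2))) :=
    Finset.sum_congr rfl (fun m _ => by rw [brec]; ring)
  have e2 : ∑ m ∈ range (t + 1), bcoef t m * (g (m + 2) - 2 * g (m + 1) + g m) =
      ∑ m ∈ range (t + 1),
        (bcoef t m * g (m + 2) - 2 * (bcoef t m * g (m + 1)) + bcoef t m * g m) :=
    Finset.sum_congr rfl (fun m _ => by ring)
  rw [e, e2, Finset.sum_sub_distrib, Finset.sum_add_distrib, Finset.sum_add_distrib,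
    Finset.sum_sub_distrib, ← Finset.mul_sum, ← Finset.mul_sum, hS1, hS2]
  ring

lemma secdiff (j m : ℕ) :
    ((m + 2 + j).choose (2 * j + 2) : ℤ) - 2 * ((m + 1 + j).choose (2 * j + 2) : ℤ)
      + ((m + j).choose (2 * j + 2) : ℤ) = ((m + j).choose (2 * j) : ℤ) := by
  rw [show m + 2 + j = (m + j) + 2 from by ring, show m + 1 + j = (m + j) + 1 from by ring,
    choose_two_step (m + j) (2 * j)]
  have h : (((m + j) + 1).choose (2 * j + 2) : ℤ) =
      ((m + j).choose (2 * j + 1) : ℤ) + ((m + j).choose (2 * j + 2) : ℤ) := by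
    have hn : ((m + j) + 1).choose (2 * j + 2) =
        (m + j).choose (2 * j + 1) + (m + j).choose (2 * j + 2) :=
      Nat.choose_succ_succ' (m + j) (2 * j + 1)
    exact_mod_cast hn
  rw [h]; ring

lemma key2 (j : ℕ) : ∀ i : ℕ,
    (∑ m ∈ range (i + 1), bcoef i m * (((m + j).choose (2 * j) : ℤ))) =
      if i = j then 1 else 0 := by
  induction j with
  | zero =>
    intro i
    match i with
    | 0 => simpa using bcoef00
    | t + 1 =>
      have e : ∑ m ∈ range (t + 2), bcoef (t + 1) m * (((m + 0).choose (2 * 0) : ℤ)) =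
          ∑ m ∈ range (t + 2), bcoef (t + 1) m :=
        Finset.sum_congr rfl (fun m _ => by simp)
      rw [e, psum t (t + 1),
        Nat.choose_eq_zero_of_lt (show 2 * t + 1 < t + 1 + (t + 1) from by omega),
        Nat.choose_eq_zero_of_lt (show 2 * t + 1 < t + (t + 1) + 2 from by omega)]
      simp
  | succ j ih =>
    intro i
    match i with
    | 0 =>
      rw [Finset.sum_range_one, bcoef00,
        Nat.choose_eq_zero_of_lt (show 0 + (j + 1) < 2 * (j + 1) from by omega)]
      simp
    | t + 1 =>
      have e : ∑ m ∈ range (t + 2), bcoef (t + 1) m * (((m + (j + 1)).choose (2 * (j + 1)) : ℤ)) =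
          ∑ m ∈ range (t + 2), bcoef (t + 1) m * (fun s => (((s + j).choose (2 * j + 2) : ℤ))) (m + 1) :=
        Finset.sum_congr rfl (fun m _ => by
          rw [show m + (j + 1) = m + 1 + j from by ring, show 2 * (j + 1) = 2 * j + 2 from by ring])
      rw [e, sumstep t (fun s => (((s + j).choose (2 * j + 2) : ℤ)))]
      have e2 : ∑ m ∈ range (t + 1),
          bcoef t m * (((m + 2 + j).choose (2 * j + 2) : ℤ) - 2 * ((m + 1 + j).choose (2 * j + 2) : ℤ)
            + ((m + j).choose (2 * j + 2) : ℤ)) =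
          ∑ m ∈ range (t + 1), bcoef t m * ((m + j).choose (2 * j) : ℤ) :=
        Finset.sum_congr rfl (fun m _ => by rw [secdiff j m])
      rw [e2, ih t,
        Nat.choose_eq_zero_of_lt (show 1 + j < 2 * j + 2 from by omega),
        Nat.choose_eq_zero_of_lt (show 0 + j < 2 * j + 2 from by omega)]
      simp [Nat.add_right_cancel_iff]

lemma bcoef_zero_right (m : ℕ) : bcoef m 0 = (-1) ^ m * (catalan m : ℤ) := by
  rw [bcoef_def]
  have hcan : ((2 * m).choose (m + 0) : ℤ) - ((2 * m).choose (m + 0 + 1) : ℤ) = (catalan m : ℤ) := by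
    have h1 : (2 * m).choose (m + 1) * (m + 1) = (2 * m).choose m * m := by
      have := Nat.choose_succ_right_eq (2 * m) m
      rwa [show 2 * m - m = m from by omega] at this
    have h2 : (m + 1) * catalan m = (2 * m).choose m := succ_mul_catalan_eq_centralBinom m
    have hm : ((m : ℤ) + 1) ≠ 0 := by positivity
    apply mul_left_cancel₀ hm
    have h1' : ((2 * m).choose (m + 1) : ℤ) * ((m : ℤ) + 1) = ((2 * m).choose m : ℤ) * m := by
      exact_mod_cast h1
    have h2' : ((m : ℤ) + 1) * (catalan m : ℤ) = ((2 * m).choose m : ℤ) := by exact_mod_cast h2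
    rw [Nat.add_zero]
    nlinarith [h1', h2']
  rw [hcan, Nat.add_zero]

lemma key (r : ℕ) :
    ∑ m ∈ range (r + 1), ((r + m).choose (2 * m) : ℤ) * ((-1) ^ m * (catalan m : ℤ)) =
      if r = 0 then 1 else 0 := by
  classical
  set N := r + 1 with hN
  let Bm : Matrix (Fin N) (Fin N) ℤ := Matrix.of fun i m => bcoef (i : ℕ) (m : ℕ)
  let Am : Matrix (Fin N) (Fin N) ℤ :=
    Matrix.of fun m j => (((m : ℕ) + (j : ℕ)).choose (2 * (j : ℕ)) : ℤ)
  have hBA : Bm * Am = 1 := by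
    ext i j
    rw [Matrix.mul_apply]
    have hsum : ∑ m : Fin N, Bm i m * Am m j =
        ∑ m ∈ range N, bcoef (i : ℕ) m * ((m + (j : ℕ)).choose (2 * (j : ℕ)) : ℤ) :=
      Fin.sum_univ_eq_sum_range (fun m => bcoef (i : ℕ) m * ((m + (j : ℕ)).choose (2 * (j : ℕ)) : ℤ)) N
    rw [hsum]
    have hsub : ∑ m ∈ range N, bcoef (i : ℕ) m * ((m + (j : ℕ)).choose (2 * (j : ℕ)) : ℤ) =
        ∑ m ∈ range ((i : ℕ) + 1), bcoef (i : ℕ) m * ((m + (j : ℕ)).choose (2 * (j : ℕ)) : ℤ) := by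
      refine (Finset.sum_subset ?_ ?_).symm
      · exact Finset.range_subset_range.mpr (by omega)
      · intro m _ hm
        rw [bcoef_eq_zero (by simp at hm; omega), zero_mul]
    rw [hsub, key2 (j : ℕ) (i : ℕ), Matrix.one_apply]
    simp [Fin.ext_iff]
  have hAB : Am * Bm = 1 := mul_eq_one_comm.mp hBA
  have hentry := congrFun (congrFun hAB (Fin.last r)) 0
  rw [Matrix.mul_apply, Matrix.one_apply] at hentry
  have hsum2 : ∑ m : Fin N, Am (Fin.last r) m * Bm m 0 =
      ∑ m ∈ range N, ((r + m).choose (2 * m) : ℤ) * bcoef m 0 := by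
    apply Fin.sum_univ_eq_sum_range (fun m => ((r + m).choose (2 * m) : ℤ) * bcoef m 0) N
  rw [hsum2] at hentry
  have : ∑ m ∈ range N, ((r + m).choose (2 * m) : ℤ) * bcoef m 0 =
      ∑ m ∈ range (r + 1), ((r + m).choose (2 * m) : ℤ) * ((-1) ^ m * (catalan m : ℤ)) :=
    Finset.sum_congr rfl (fun m _ => by rw [bcoef_zero_right])
  rw [this] at hentry
  rw [hentry]
  by_cases hr : r = 0
  · subst hr; simp
  · rw [if_neg hr, if_neg (by simp [Fin.ext_iff]; omega)]

noncomputable def Mmat (n : ℕ) : Matrix (Fin n) (Fin n) ℤ :=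
  Matrix.of fun i j : Fin n => (Nat.choose ((i : ℕ) + (j : ℕ) + 1) (2 * (j : ℕ)) : ℤ)

lemma mulVec_catalan (n : ℕ) :
    (Mmat (n + 1)).mulVec (fun m : Fin (n + 1) => (-1) ^ (m : ℕ) * (catalan (m : ℕ) : ℤ)) =
      Pi.single (Fin.last n) ((-1) ^ n * (catalan (n + 1) : ℤ)) := by
  funext i
  have hlhs : (Mmat (n + 1)).mulVec (fun m : Fin (n + 1) => (-1) ^ (m : ℕ) * (catalan (m : ℕ) : ℤ)) i =
      ∑ m ∈ range (n + 1), (((i : ℕ) + m + 1).choose (2 * m) : ℤ) * ((-1) ^ m * (catalan m : ℤ)) := by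
    rw [Matrix.mulVec, dotProduct]
    exact Fin.sum_univ_eq_sum_range
      (fun m => (((i : ℕ) + m + 1).choose (2 * m) : ℤ) * ((-1) ^ m * (catalan m : ℤ))) (n + 1)
  rw [hlhs]
  by_cases hi : i = Fin.last n
  · subst hi
    rw [Pi.single_eq_same]
    simp only [Fin.val_last]
    have hk := key (n + 1)
    rw [if_neg (by omega), Finset.sum_range_succ] at hk
    have e1 : ∑ m ∈ range (n + 1), ((n + 1 + m).choose (2 * m) : ℤ) * ((-1) ^ m * (catalan m : ℤ)) =
        ∑ m ∈ range (n + 1), ((n + m + 1).choose (2 * m) : ℤ) * ((-1) ^ m * (catalan m : ℤ)) :=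
      Finset.sum_congr rfl (fun m _ => by rw [show n + 1 + m = n + m + 1 from by ring])
    rw [e1] at hk
    have e2 : ((n + 1 + (n + 1)).choose (2 * (n + 1)) : ℤ) = 1 := by
      rw [show n + 1 + (n + 1) = 2 * (n + 1) from by ring, Nat.choose_self]; norm_num
    rw [e2, one_mul] at hk
    have : (-1 : ℤ) ^ (n + 1) = -(-1) ^ n := by rw [pow_succ]; ring
    rw [this] at hk
    linarith
  · rw [Pi.single_eq_of_ne hi]
    have hilt : (i : ℕ) < n := by
      have h1 := i.isLt
      have h2 : (i : ℕ) ≠ n := fun h => hi (Fin.ext (by simp [Fin.val_last, h]))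
      omega
    have hk := key ((i : ℕ) + 1)
    rw [if_neg (by omega)] at hk
    have e1 : ∑ m ∈ range ((i : ℕ) + 2), (((i : ℕ) + 1 + m).choose (2 * m) : ℤ) * ((-1) ^ m * (catalan m : ℤ)) =
        ∑ m ∈ range ((i : ℕ) + 2), (((i : ℕ) + m + 1).choose (2 * m) : ℤ) * ((-1) ^ m * (catalan m : ℤ)) :=
      Finset.sum_congr rfl (fun m _ => by rw [show (i : ℕ) + 1 + m = (i : ℕ) + m + 1 from by ring])
    rw [e1] at hk
    rw [← hk]
    refine (Finset.sum_subset (Finset.range_subset_range.mpr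
      (show (i : ℕ) + 2 ≤ n + 1 by omega)) ?_).symm
    intro m _ hm
    simp only [Finset.mem_range] at hm
    rw [Nat.choose_eq_zero_of_lt (by omega)]
    simp

lemma cramer_mulVec_self {n : ℕ} (M : Matrix (Fin n) (Fin n) ℤ) (c : Fin n → ℤ) :
    Matrix.cramer M (M.mulVec c) = M.det • c := by
  have h1 : M.mulVec c = ∑ m : Fin n, c m • Matrix.transpose M m := by
    funext i
    rw [Matrix.mulVec, dotProduct]
    rw [Finset.sum_apply]
    exact Finset.sum_congr rfl (fun m _ => by
      simp [Matrix.transpose_apply, mul_comm])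
  rw [h1, map_sum]
  have h2 : ∀ m : Fin n, Matrix.cramer M (c m • Matrix.transpose M m) = c m • Pi.single m M.det := by
    intro m
    rw [LinearMap.map_smul]
    congr 1
    have := Matrix.cramer_transpose_row_self (Matrix.transpose M) m
    rwa [Matrix.transpose_transpose, Matrix.det_transpose] at this
  rw [Finset.sum_congr rfl (fun m _ => h2 m)]
  funext j
  rw [Finset.sum_apply]
  rw [Finset.sum_eq_single j (fun m _ hm => by simp [Pi.single_eq_of_ne' hm]) (by simp)]
  simp [mul_comm]

lemma det_update_single (n : ℕ) (v : ℤ) :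
    ((Mmat (n + 1)).updateCol (Fin.last n) (Pi.single (Fin.last n) v)).det =
      v * (Mmat n).det := by
  rw [Matrix.det_succ_column _ (Fin.last n)]
  rw [Finset.sum_eq_single (Fin.last n) ?h1 ?h2]
  · rw [Matrix.updateCol_self, Pi.single_eq_same]
    have hsub : ((Mmat (n + 1)).updateCol (Fin.last n) (Pi.single (Fin.last n) v)).submatrix
        (Fin.last n).succAbove (Fin.last n).succAbove = Mmat n := by
      funext i j
      simp only [Matrix.submatrix_apply, Fin.succAbove_last]
      rw [Matrix.updateCol_apply, if_neg (Fin.castSucc_lt_last j).ne]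
      simp [Mmat]
    rw [hsub]
    have : (-1 : ℤ) ^ ((Fin.last n : ℕ) + (Fin.last n : ℕ)) = 1 := by
      rw [show ((Fin.last n : ℕ) + (Fin.last n : ℕ)) = 2 * n from by
        simp [Fin.val_last]; ring]
      rw [pow_mul]; norm_num
    rw [this]; ring
  case h1 =>
    intro i _ hne
    rw [Matrix.updateCol_self, Pi.single_eq_of_ne hne]
    ring
  case h2 =>
    intro h
    exact absurd (Finset.mem_univ _) h

lemma det_rel (n : ℕ) :
    (catalan n : ℤ) * (Mmat (n + 1)).det = (catalan (n + 1) : ℤ) * (Mmat n).det := by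
  have hc := cramer_mulVec_self (Mmat (n + 1))
    (fun m : Fin (n + 1) => (-1) ^ (m : ℕ) * (catalan (m : ℕ) : ℤ))
  rw [mulVec_catalan] at hc
  have hlast := congrFun hc (Fin.last n)
  rw [Matrix.cramer_apply, det_update_single n ((-1) ^ n * (catalan (n + 1) : ℤ))] at hlast
  simp only [Pi.smul_apply, smul_eq_mul, Fin.val_last] at hlast
  have hne : ((-1 : ℤ) ^ n) ≠ 0 := pow_ne_zero _ (by norm_num)
  apply mul_left_cancel₀ hne
  calc (-1 : ℤ) ^ n * ((catalan n : ℤ) * (Mmat (n + 1)).det)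
      = (Mmat (n + 1)).det * ((-1) ^ n * (catalan n : ℤ)) := by ring
    _ = (-1) ^ n * (catalan (n + 1) : ℤ) * (Mmat n).det := hlast.symm
    _ = (-1) ^ n * ((catalan (n + 1) : ℤ) * (Mmat n).det) := by ring

theorem stmt_2 (n : ℕ) :
    Matrix.det (Matrix.of fun i j : Fin n =>
        (Nat.choose ((i : ℕ) + (j : ℕ) + 1) (2 * (j : ℕ)) : ℤ))
      = (catalan n : ℤ) := by
  have : ∀ k : ℕ, (Mmat k).det = (catalan k : ℤ) := by
    intro k
    induction k with
    | zero => simp [Mmat, catalan_zero]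
    | succ k ih =>
      have h := det_rel k
      rw [ih] at h
      have hpos : 0 < catalan k := by
        rw [catalan_eq_centralBinom_div]
        exact Nat.div_pos (Nat.le_of_dvd k.centralBinom_pos k.succ_dvd_centralBinom)
          (Nat.succ_pos k)
      have hne' : (catalan k : ℤ) ≠ 0 := by exact_mod_cast Nat.pos_iff_ne_zero.mp hpos
      exact mul_left_cancel₀ hne' (by linarith [h])
  exact this n
end

section
/- For all integers n ≥ 0 and k ≥ 0, ∑_{j=0}^{n} (-1)^{n-j} binom(n+k+j, n-j) C_j^{(k+1)} = (if n = 0 then 1 else 0), as an identity in ℚ. -/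
/-!
For `n = m + 1` the `j`-th summand equals `(k+1)/n · (-1)^(n-j) binom(n, j) binom(n+k+j, m)`.
Hence the sum is `(k+1)/n` times the `n`-th forward difference at `0` of
`x ↦ binom(x + n + k, m)`, a polynomial of degree `m < n` in `x`, so it vanishes.
-/

/-- `C n k` is the number `C_n^{(k)} = (k/(2n+k))·binom(2n+k, n)` as a rational number. -/
def genCatalan (n k : ℕ) : ℚ :=
  ((k : ℚ) / ((2 * n + k : ℕ) : ℚ)) * (Nat.choose (2 * n + k) n : ℚ)

open Finset Nat

theorem alternating_sum_choose_mul_choose_add_eq_zero {m n : ℕ} (hmn : m < n) (c : ℕ) :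
    ∑ j ∈ range (n + 1), (-1 : ℤ) ^ (n - j) * n.choose j * (c + j).choose m = 0 := by
  obtain ⟨d, rfl⟩ := Nat.exists_eq_add_of_lt hmn
  have hchoose := fwdDiff_iter_choose 0 m
  simp only [add_zero, choose_zero_right, cast_one] at hchoose
  have hdiff : (fwdDiff 1)^[m + d + 1] (fun x ↦ x.choose m : ℕ → ℤ) = 0 := by
    rw [show m + d + 1 = d + 1 + m by ring, Function.iterate_add_apply, hchoose,
      Function.iterate_succ_apply, fwdDiff_const]
    ext x
    simp [fwdDiff_iter_eq_sum_shift]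
  simpa [fwdDiff_iter_eq_sum_shift, mul_assoc] using congr_fun hdiff c

theorem genCatalan_succ_eq (j k : ℕ) :
    genCatalan j (k + 1) = (k + 1) * (2 * j + k)! / (j ! * (j + k + 1)!) := by
  rw [genCatalan, Nat.cast_choose ℚ (by omega : j ≤ 2 * j + (k + 1)),
    show 2 * j + (k + 1) - j = j + k + 1 by omega, show 2 * j + (k + 1) = 2 * j + k + 1 by ring,
    factorial_succ]
  push_cast
  field_simp

theorem succ_mul_choose_mul_genCatalan {m j : ℕ} (k : ℕ) (hj : j ≤ m + 1) :
    (m + 1 : ℚ) * ((m + 1 + k + j).choose (m + 1 - j) * genCatalan j (k + 1))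
      = (k + 1) * (m + 1).choose j * (m + 1 + k + j).choose m := by
  rw [genCatalan_succ_eq, Nat.cast_choose ℚ (by omega : m + 1 - j ≤ m + 1 + k + j),
    Nat.cast_choose ℚ hj, Nat.cast_choose ℚ (by omega : m ≤ m + 1 + k + j),
    show m + 1 + k + j - (m + 1 - j) = 2 * j + k by omega,
    show m + 1 + k + j - m = j + k + 1 by omega, factorial_succ m]
  push_cast
  field_simp

theorem stmt_3 (n k : ℕ) :
    ∑ j ∈ Finset.range (n + 1),
        (-1 : ℚ) ^ (n - j) * (Nat.choose (n + k + j) (n - j) : ℚ) * genCatalan j (k + 1)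
      = if n = 0 then 1 else 0 := by
  rcases n with _ | m
  · have hk : (k : ℚ) + 1 ≠ 0 := by positivity
    simp [genCatalan, hk]
  · have hvanish : ∑ j ∈ range (m + 1 + 1),
        (-1 : ℚ) ^ (m + 1 - j) * (m + 1).choose j * (m + 1 + k + j).choose m = 0 := by
      exact_mod_cast alternating_sum_choose_mul_choose_add_eq_zero (lt_add_one m) (m + 1 + k)
    have hm : (m + 1 : ℚ) ≠ 0 := by positivity
    rw [if_neg (succ_ne_zero m), ← mul_right_inj' hm, mul_zero, ← mul_zero ((k : ℚ) + 1),
      ← hvanish, mul_sum, mul_sum]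
    refine sum_congr rfl fun j hj ↦ ?_
    have hterm := succ_mul_choose_mul_genCatalan k (Nat.lt_succ_iff.mp (mem_range.mp hj))
    linear_combination (-1 : ℚ) ^ (m + 1 - j) * hterm
end

section
/- For all integers n ≥ 0 and k ≥ 1, the determinant of the n×n matrix over ℚ with entries binom(i+j+k, i-j+1) for 0 ≤ j ≤ i+1 and 0 for j > i+1, 0 ≤ i, j ≤ n-1, equals C_n^{(k)} = (k/(2n+k))·binom(2n+k, n). -/
/-!
Write `D_n` for the determinant and `a_{ij}` for the entries. The matrix is lower Hessenberg with
ones on the superdiagonal, so expanding along the last row gives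
`D_{n+1} = ∑_{j ≤ n} (-1)^(n+j) a_{nj} D_j`. The numbers `C_n^{(k)}` satisfy the same recurrence
because of the identity `∑_{t+s=q} (-1)^t C_t^{(k)} binom(p+t, s) = binom(p-k, q)` at `p = n + k`,
`q = n + 1`: the left side is the coefficient of `x^q` in `(1+x)^p c(-x(1+x))^k`, and
`c(-x(1+x)) = 1/(1+x)`. Instead of composing power series, the identity is proved by induction on
`q` and `k` from `c^(k+1) = c^k + z c^(k+2)`.
-/

open Finset Matrix

/-- `C_t^{(k)}` in ballot form `binom(2t+k-1, t) - binom(2t+k-1, t-1)`, which, unlike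
`k/(2t+k) * binom(2t+k, t)`, also gives the right coefficients `[t = 0]` of `c(z)^0`. -/
def catalanPow (k : ℕ) : ℕ → ℚ
  | 0 => 1
  | t + 1 => (2 * t + k + 1).choose (t + 1) - (2 * t + k + 1).choose t

@[simp]
lemma catalanPow_zero_right (k : ℕ) : catalanPow k 0 = 1 := rfl

lemma catalanPow_zero_succ (t : ℕ) : catalanPow 0 (t + 1) = 0 := by
  simp [catalanPow, Nat.choose_symm_half]

/-- Coefficientwise form of `c^(k+1) = c^k + z c^(k+2)`, i.e. of `c = 1 + z c^2`. -/
lemma catalanPow_succ_succ (k t : ℕ) :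
    catalanPow (k + 1) (t + 1) = catalanPow k (t + 1) + catalanPow (k + 2) t := by
  rcases t with _ | s
  · simp [catalanPow]
  · have h₁ := Nat.choose_succ_succ (2 * s + k + 3) (s + 1)
    have h₂ := Nat.choose_succ_succ (2 * s + k + 3) s
    simp only [catalanPow, show 2 * (s + 1) + (k + 1) + 1 = 2 * s + k + 3 + 1 by ring,
      show 2 * (s + 1) + k + 1 = 2 * s + k + 3 by ring,
      show 2 * s + (k + 2) + 1 = 2 * s + k + 3 by ring, h₁, h₂]
    push_cast; ring

lemma catalanPow_eq_div_mul_choose {k : ℕ} (hk : k ≠ 0) (n : ℕ) :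
    catalanPow k n = (k / (2 * n + k : ℕ) : ℚ) * (2 * n + k).choose n := by
  rcases n with _ | t
  · have : (k : ℚ) ≠ 0 := by exact_mod_cast hk
    simp [this]
  · have h₁ := congrArg (Nat.cast : ℕ → ℚ) (Nat.choose_succ_right_eq (2 * t + k + 1) t)
    have h₂ := congrArg (Nat.cast : ℕ → ℚ) (Nat.add_one_mul_choose_eq (2 * t + k + 1) t)
    have ht : ((t : ℚ) + 1) ≠ 0 := by positivity
    rw [show 2 * (t + 1) + k = 2 * t + k + 1 + 1 by ring, catalanPow, div_mul_eq_mul_div,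
      eq_div_iff (by positivity)]
    push_cast [show t ≤ 2 * t + k + 1 by omega] at h₁ h₂ ⊢
    apply mul_right_cancel₀ ht
    linear_combination (2 * (t : ℚ) + k + 2) * h₁ + (k : ℚ) * h₂

/-- The coefficient of `x^q` in `(1+x)^p c(-x(1+x))^k = (1+x)^(p-k)`. -/
def catalanBinomSum (k p q : ℕ) : ℚ :=
  ∑ x ∈ antidiagonal q, (-1) ^ x.1 * catalanPow k x.1 * (p + x.1).choose x.2

lemma catalanBinomSum_zero_right (k p : ℕ) : catalanBinomSum k p 0 = 1 := by
  simp [catalanBinomSum]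

lemma catalanBinomSum_zero_left (p q : ℕ) : catalanBinomSum 0 p q = p.choose q := by
  rcases q with _ | q
  · simp [catalanBinomSum]
  · simp [catalanBinomSum, Finset.Nat.sum_antidiagonal_succ, catalanPow_zero_succ]

lemma catalanBinomSum_succ_succ (k p q : ℕ) :
    catalanBinomSum (k + 1) p (q + 1) =
      catalanBinomSum k p (q + 1) - catalanBinomSum (k + 2) (p + 1) q := by
  simp only [catalanBinomSum, Finset.Nat.sum_antidiagonal_succ, catalanPow_succ_succ,
    catalanPow_zero_right, add_sub_assoc, ← sum_sub_distrib]
  congr 1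
  refine sum_congr rfl fun x _ => ?_
  rw [show p + (x.1 + 1) = p + 1 + x.1 by ring]
  ring

theorem catalanBinomSum_add_left (q k d : ℕ) : catalanBinomSum k (k + d) q = d.choose q := by
  induction q generalizing k d with
  | zero => simp [catalanBinomSum_zero_right]
  | succ q ihq =>
    induction k generalizing d with
    | zero => simpa using catalanBinomSum_zero_left d (q + 1)
    | succ k ihk =>
      rw [catalanBinomSum_succ_succ, show k + 1 + d = k + (d + 1) by ring, ihk,
        show k + (d + 1) + 1 = k + 2 + d by ring, ihq, Nat.choose_succ_succ]
      push_cast; ring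

def corner {α : Type*} (f : ℕ → ℕ → α) (n : ℕ) : Matrix (Fin n) (Fin n) α := of fun i j => f i j

@[simp]
lemma corner_apply {α : Type*} (f : ℕ → ℕ → α) {n : ℕ} (i j : Fin n) :
    corner f n i j = f i j := rfl

section Hessenberg

variable {R : Type*} [CommRing R]

lemma det_corner_succ_of_col (f : ℕ → ℕ → R) (n : ℕ) (hf : ∀ i < n, f i n = 0) (hn : f n n = 1) :
    (corner f (n + 1)).det = (corner f n).det := by
  rw [det_succ_column _ (Fin.last n), sum_eq_single (Fin.last n)]
  · have hminor : (corner f (n + 1)).submatrix Fin.castSucc Fin.castSucc = corner f n := rfl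
    simp [hminor, hn, ← two_mul]
  · intro i _ hi
    simp [hf i (Fin.val_lt_last hi)]
  · simp

lemma det_corner_eq_of_le (f : ℕ → ℕ → R) {j n : ℕ} (hjn : j ≤ n)
    (hf : ∀ m ≥ j, ∀ i < m, f i m = 0) (hf₁ : ∀ m ≥ j, f m m = 1) :
    (corner f n).det = (corner f j).det := by
  induction n, hjn using Nat.le_induction with
  | base => rfl
  | succ n hjn ih => rw [det_corner_succ_of_col f n (hf n hjn) (hf₁ n hjn), ih]

lemma Fin.val_succAbove {n : ℕ} (j : Fin (n + 1)) (c : Fin n) :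
    (j.succAbove c : ℕ) = if (c : ℕ) < j then (c : ℕ) else c + 1 := by
  unfold Fin.succAbove
  split_ifs <;> simp_all [Fin.lt_def]

/-- Deleting the last row and column `j` of a lower Hessenberg matrix with unit superdiagonal
leaves a block lower triangular matrix with diagonal blocks `corner f j` and a unitriangular one. -/
lemma det_corner_succ_of_hessenberg (f : ℕ → ℕ → R) (hf : ∀ i j, i + 1 < j → f i j = 0)
    (hf₁ : ∀ i, f i (i + 1) = 1) (n : ℕ) :
    (corner f (n + 1)).det =
      ∑ j ∈ range (n + 1), (-1) ^ (n + j) * f n j * (corner f j).det := by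
  rw [det_succ_row _ (Fin.last n), ← Fin.sum_univ_eq_sum_range]
  refine sum_congr rfl fun j _ => ?_
  let g : ℕ → ℕ → R := fun r c => f r (if c < j then c else c + 1)
  have hminor : (corner f (n + 1)).submatrix (Fin.last n).succAbove j.succAbove = corner g n := by
    ext r c
    simp [g, Fin.succAbove_last, Fin.val_succAbove]
  have hg : (corner g n).det = (corner g j).det :=
    det_corner_eq_of_le g (Nat.lt_succ_iff.mp j.isLt)
      (fun m hm i hi => by simp [g, Nat.not_lt.mpr hm, hf i (m + 1) (by omega)])
      (fun m hm => by simp [g, Nat.not_lt.mpr hm, hf₁])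
  have hcorner : corner g j = corner f j := by
    ext r c
    simp [g]
  rw [hminor, hg, hcorner, corner_apply, Fin.val_last]

end Hessenberg

def binomEntry (k i j : ℕ) : ℚ :=
  if j ≤ i + 1 then ((i + j + k).choose (i + 1 - j) : ℚ) else 0

lemma sum_binomEntry_mul_catalanPow (k n : ℕ) :
    ∑ j ∈ range (n + 1), (-1) ^ (n + j) * binomEntry k n j * catalanPow k j =
      catalanPow k (n + 1) := by
  have h := catalanBinomSum_add_left (n + 1) k n
  rw [Nat.choose_succ_self, catalanBinomSum, Finset.Nat.sum_antidiagonal_succ',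
    Finset.Nat.sum_antidiagonal_eq_sum_range_succ
      (fun t s => (-1) ^ t * catalanPow k t * ((k + n + t).choose (s + 1) : ℚ))] at h
  have hsign : ((-1 : ℚ) ^ n) ^ 2 = 1 := by rw [← pow_mul, pow_mul']; simp
  calc ∑ j ∈ range (n + 1), (-1) ^ (n + j) * binomEntry k n j * catalanPow k j
      = (-1) ^ n * ∑ j ∈ range (n + 1),
          (-1) ^ j * catalanPow k j * ((k + n + j).choose (n - j + 1) : ℚ) := by
        rw [mul_sum]
        refine sum_congr rfl fun j hj => ?_
        have hj : j ≤ n := Nat.lt_succ_iff.mp (mem_range.mp hj)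
        rw [binomEntry, if_pos (by omega), show n + j + k = k + n + j by ring,
          show n + 1 - j = n - j + 1 by omega, pow_add]
        ring
    _ = catalanPow k (n + 1) := by
        simp only [Nat.succ_eq_add_one, Nat.choose_zero_right] at h
        push_cast at h
        linear_combination (-1 : ℚ) ^ n * h + catalanPow k (n + 1) * hsign

theorem det_corner_binomEntry (k n : ℕ) : (corner (binomEntry k) n).det = catalanPow k n := by
  induction n using Nat.strong_induction_on with
  | _ n ih =>
  rcases n with _ | n
  · simp
  · rw [det_corner_succ_of_hessenberg _ (fun i j hij => by rw [binomEntry, if_neg (by omega)])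
      (fun i => by simp [binomEntry]) n, ← sum_binomEntry_mul_catalanPow]
    exact sum_congr rfl fun j hj => by rw [ih j (mem_range.mp hj)]

theorem stmt_4 (n k : ℕ) (hk : 1 ≤ k) :
    Matrix.det (Matrix.of fun i j : Fin n =>
        if (j : ℕ) ≤ (i : ℕ) + 1 then
          (Nat.choose ((i : ℕ) + (j : ℕ) + k) ((i : ℕ) + 1 - (j : ℕ)) : ℚ)
        else 0)
      = ((k : ℚ) / ((2 * n + k : ℕ) : ℚ)) * (Nat.choose (2 * n + k) n : ℚ) :=
  (det_corner_binomEntry k n).trans (catalanPow_eq_div_mul_choose (by omega) n)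
end

section
/- For all integers n ≥ 0 and k ≥ 1, the determinant of the n×n matrix over ℚ with entries binom(j+k, i-j+1) for 0 ≤ j ≤ i+1 and 0 for j > i+1, 0 ≤ i, j ≤ n-1, equals C_n^{(k)} = (k/(2n+k))·binom(2n+k, n). -/
/-!
Expanding the lower Hessenberg determinant `D n` along its last row (its superdiagonal consists
of ones) gives `∑_{j ≤ n} (-1)^j binom(j+k, n-j) D j = 0` for `n ≥ 1`, a recurrence that fixes
`D` from `D 0 = 1`. In generating functions it reads `D(-z(1+z)) (1+z)^k = 1`. The Catalan series
`c = 1 + z c^2` satisfies `c(-z(1+z)) = 1/(1+z)`, so the coefficients of `c^k` obey the same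
recurrence; on coefficients this is a double induction driven by `c^(b+1) = c^b + z c^(b+2)` and
Pascal's rule.
-/

open Finset Matrix

theorem Fin.val_succAbove_eq_ite {n : ℕ} (p : Fin (n + 1)) (i : Fin n) :
    (p.succAbove i : ℕ) = if (i : ℕ) < p then (i : ℕ) else i + 1 := by
  unfold Fin.succAbove
  split_ifs <;> simp_all [Fin.lt_def]

section Hessenberg

variable {R : Type*} [CommRing R]

def lowerHessenberg (f : ℕ → ℕ → R) (n : ℕ) : Matrix (Fin n) (Fin n) R :=
  of fun i j => if (j : ℕ) ≤ i + 1 then f i j else 0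

theorem lowerHessenberg_det_minor_last {f : ℕ → ℕ → R} (hf : ∀ i, f i (i + 1) = 1) {n : ℕ}
    (j : Fin (n + 1)) :
    ((lowerHessenberg f (n + 1)).submatrix Fin.castSucc j.succAbove).det =
      (lowerHessenberg f j).det := by
  set N := (lowerHessenberg f (n + 1)).submatrix Fin.castSucc j.succAbove
  have hN (p q : Fin n) : N p q =
      if (q : ℕ) < j then (if (q : ℕ) ≤ p + 1 then f p q else 0)
      else (if (q : ℕ) ≤ p then f p (q + 1) else 0) := by
    simp only [N, lowerHessenberg, submatrix_apply, of_apply, Fin.val_castSucc,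
      Fin.val_succAbove_eq_ite]
    split_ifs <;> first | rfl | omega
  rw [N.twoBlockTriangular_det' (fun i => (i : ℕ) < j) ?upper]
  case upper =>
    intro p hp q hq
    rw [hN, if_neg hq, if_neg (by omega)]
  have hfirst : N.toSquareBlockProp (fun i => (i : ℕ) < j) =
      (lowerHessenberg f j).submatrix (Fin.castLEquiv (Fin.is_le j)).symm
        (Fin.castLEquiv (Fin.is_le j)).symm := by
    ext p q
    simp only [toSquareBlockProp, toBlock_apply, submatrix_apply, hN, if_pos q.2]
    rfl
  have hsecond : (N.toSquareBlockProp (fun i => ¬ (i : ℕ) < j)).det = 1 := by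
    rw [det_of_isLowerTriangular]
    · refine Finset.prod_eq_one fun p _ => ?_
      simp [toSquareBlockProp, hN, p.2, hf]
    · intro p q hpq
      have hpq : (p : ℕ) < q := hpq
      simp only [toSquareBlockProp, toBlock_apply, hN, if_neg q.2]
      rw [if_neg (by omega)]
  rw [hfirst, det_submatrix_equiv_self, hsecond, mul_one]

theorem lowerHessenberg_det_succ {f : ℕ → ℕ → R} (hf : ∀ i, f i (i + 1) = 1) (n : ℕ) :
    (lowerHessenberg f (n + 1)).det =
      ∑ j ∈ range (n + 1), (-1) ^ (n + j) * f n j * (lowerHessenberg f j).det := by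
  rw [det_succ_row _ (Fin.last n), ← Fin.sum_univ_eq_sum_range]
  refine Fintype.sum_congr _ _ fun j => ?_
  rw [Fin.succAbove_last, lowerHessenberg_det_minor_last hf, Fin.val_last, lowerHessenberg,
    of_apply, Fin.val_last, if_pos (by omega)]

theorem lowerHessenberg_det_eq_of_recurrence {f : ℕ → ℕ → R} (hf : ∀ i, f i (i + 1) = 1)
    {d : ℕ → R} (h0 : d 0 = 1)
    (hd : ∀ n, d (n + 1) = ∑ j ∈ range (n + 1), (-1) ^ (n + j) * f n j * d j) (n : ℕ) :
    (lowerHessenberg f n).det = d n := by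
  induction n using Nat.strong_induction_on with
  | _ n ih =>
    cases n with
    | zero => rw [det_fin_zero, h0]
    | succ n =>
      rw [lowerHessenberg_det_succ hf, hd]
      exact sum_congr rfl fun j hj => by rw [ih j (mem_range.1 hj)]

end Hessenberg

-- The case `n = 0` is split off so that `catalanPowCoeff 0 0 = 1`; the closed form gives `0 / 0`.
def catalanPowCoeff (k n : ℕ) : ℚ :=
  if n = 0 then 1 else (k : ℚ) / ((2 * n + k : ℕ) : ℚ) * ((2 * n + k).choose n : ℚ)

@[simp]
theorem catalanPowCoeff_zero (k : ℕ) : catalanPowCoeff k 0 = 1 := if_pos rfl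

theorem catalanPowCoeff_zero_succ (n : ℕ) : catalanPowCoeff 0 (n + 1) = 0 := by
  simp [catalanPowCoeff]

theorem catalanPowCoeff_of_pos {k : ℕ} (hk : 0 < k) (n : ℕ) :
    catalanPowCoeff k n = (k : ℚ) / ((2 * n + k : ℕ) : ℚ) * ((2 * n + k).choose n : ℚ) := by
  rcases n with _ | n
  · simp [catalanPowCoeff, hk.ne']
  · exact if_neg n.succ_ne_zero

-- `c^(k+1) = c^k + z c^(k+2)`, from `c = 1 + z c^2`
theorem catalanPowCoeff_succ_succ (k n : ℕ) :
    catalanPowCoeff (k + 1) (n + 1) = catalanPowCoeff k (n + 1) + catalanPowCoeff (k + 2) n := by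
  have hk2 := catalanPowCoeff_of_pos (k := k + 2) (by omega) n
  simp only [catalanPowCoeff, if_neg n.succ_ne_zero] at hk2 ⊢
  rw [hk2]
  have hpascal := Nat.choose_succ_succ (2 * n + k + 2) n
  have habsorb := Nat.choose_succ_right_eq (2 * n + k + 2) n
  rw [show 2 * n + k + 2 - n = n + k + 2 by omega] at habsorb
  rw [show 2 * (n + 1) + (k + 1) = 2 * n + k + 2 + 1 by ring, hpascal,
    show 2 * (n + 1) + k = 2 * n + k + 2 by ring, show 2 * n + (k + 2) = 2 * n + k + 2 by ring]
  have hq : ((2 * n + k + 2).choose (n + 1) : ℚ) * (n + 1) =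
      ((2 * n + k + 2).choose n : ℚ) * (n + k + 2) := by exact_mod_cast habsorb
  field_simp
  push_cast
  linear_combination 2 * hq

/-- Up to the sign `(-1)^n`, the coefficient of `z^n` in `(1+z)^a c(-z(1+z))^b`. Since
`c(-z(1+z)) = 1/(1+z)`, this is the coefficient of `z^n` in `(1-z)^(a-b)`. -/
def catalanSubstCoeff (a b n : ℕ) : ℚ :=
  ∑ j ∈ range (n + 1), (-1) ^ (n + j) * ((j + a).choose (n - j) : ℚ) * catalanPowCoeff b j

theorem catalanSubstCoeff_succ_succ_left (a b n : ℕ) :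
    catalanSubstCoeff (a + 1) b (n + 1) =
      catalanSubstCoeff a b (n + 1) - catalanSubstCoeff a b n := by
  unfold catalanSubstCoeff
  rw [sum_range_succ, sum_range_succ _ (n + 1), ← sub_add_eq_add_sub, ← sum_sub_distrib]
  congr 1
  · refine sum_congr rfl fun j hj => ?_
    have hj : j ≤ n := Nat.lt_succ_iff.1 (mem_range.1 hj)
    rw [show j + (a + 1) = j + a + 1 by omega, show n + 1 - j = n - j + 1 by omega,
      Nat.choose_succ_succ, show n + 1 + j = n + j + 1 by omega, pow_succ]
    push_cast
    ring
  · simp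

theorem catalanSubstCoeff_succ_succ_right (a b n : ℕ) :
    catalanSubstCoeff a (b + 1) (n + 1) =
      catalanSubstCoeff a b (n + 1) + catalanSubstCoeff (a + 1) (b + 2) n := by
  unfold catalanSubstCoeff
  simp only [sum_range_succ' _ (n + 1), catalanPowCoeff_zero, add_zero]
  rw [add_right_comm, ← sum_add_distrib]
  congr 1
  refine sum_congr rfl fun j hj => ?_
  rw [catalanPowCoeff_succ_succ, show n + 1 - (j + 1) = n - j by omega,
    show j + 1 + a = j + (a + 1) by omega, show n + 1 + (j + 1) = n + j + 2 by omega, pow_add]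
  ring

theorem catalanSubstCoeff_add_left_eq_multichoose (n a g : ℕ) :
    catalanSubstCoeff a (a + g) n = Nat.multichoose g n := by
  induction n generalizing a g with
  | zero => simp [catalanSubstCoeff]
  | succ n ih =>
    have hself (a : ℕ) : catalanSubstCoeff a a (n + 1) = 0 := by
      induction a with
      | zero =>
        refine sum_eq_zero fun j _ => ?_
        rcases j with _ | j
        · simp
        · rw [catalanPowCoeff_zero_succ, mul_zero]
      | succ a iha =>
        rw [catalanSubstCoeff_succ_succ_left, catalanSubstCoeff_succ_succ_right, iha, ih a 1,
          show a + 2 = a + 1 + 1 from rfl, ih (a + 1) 1, zero_add, sub_self]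
    induction g with
    | zero => simp [hself, Nat.multichoose_zero_succ]
    | succ g ihg =>
      rw [← add_assoc, catalanSubstCoeff_succ_succ_right, ihg,
        show a + g + 2 = a + 1 + (g + 1) by omega, ih, Nat.multichoose_succ_succ]
      push_cast
      ring

theorem catalanPowCoeff_succ_eq_sum (k n : ℕ) :
    catalanPowCoeff k (n + 1) =
      ∑ j ∈ range (n + 1),
        (-1) ^ (n + j) * ((j + k).choose (n + 1 - j) : ℚ) * catalanPowCoeff k j := by
  have h := catalanSubstCoeff_add_left_eq_multichoose (n + 1) k 0
  rw [add_zero, Nat.multichoose_zero_succ, Nat.cast_zero, catalanSubstCoeff, sum_range_succ,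
    Nat.sub_self, Nat.choose_zero_right, ← two_mul, pow_mul, neg_one_sq, one_pow, Nat.cast_one,
    one_mul, one_mul, add_eq_zero_iff_neg_eq'] at h
  rw [← neg_neg (catalanPowCoeff k (n + 1)), h, ← sum_neg_distrib]
  refine sum_congr rfl fun j _ => ?_
  rw [add_right_comm, pow_succ]
  ring

theorem stmt_5 (n k : ℕ) (hk : 1 ≤ k) :
    Matrix.det (Matrix.of fun i j : Fin n =>
        if (j : ℕ) ≤ (i : ℕ) + 1 then
          (Nat.choose ((j : ℕ) + k) ((i : ℕ) + 1 - (j : ℕ)) : ℚ)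
        else 0)
      = ((k : ℚ) / ((2 * n + k : ℕ) : ℚ)) * (Nat.choose (2 * n + k) n : ℚ) := by
  rw [← catalanPowCoeff_of_pos hk]
  exact lowerHessenberg_det_eq_of_recurrence (f := fun i j => ((j + k).choose (i + 1 - j) : ℚ))
    (by simp) (catalanPowCoeff_zero k) (catalanPowCoeff_succ_eq_sum k) n
end

section
/- For all integers 0 ≤ j ≤ i, ∑_{k=j}^{i} (-1)^{i-k} binom(i+k, i-k) · C_{k-j}^{(2j+1)} = (if i = j then 1 else 0), as an identity in ℚ. Equivalently, the inverse of the lower-triangular matrix ((-1)^{i-j} binom(i+j, i-j))_{i,j ≥ 0} is the Catalan triangle (C_{i-j}^{(2j+1)})_{i,j ≥ 0} = (((2j+1)/(i+j+1))·binom(2i, i-j))_{i,j ≥ 0}. -/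
open Finset Polynomial Nat

theorem Polynomial.sum_range_alternating_choose_mul_eval_eq_zero {R : Type*} [CommRing R]
    {P : R[X]} {n : ℕ} (hP : P.natDegree < n) (y : R) :
    ∑ k ∈ range (n + 1), (-1 : R) ^ (n - k) * n.choose k * P.eval (y + k) = 0 := by
  have := congr_fun (fwdDiff_iter_eq_zero_of_degree_lt hP) y
  rw [fwdDiff_iter_eq_sum_shift] at this
  simpa [zsmul_eq_mul] using this

theorem choose_mul_genCatalan (s m b : ℕ) (hb : b ≤ m + 1) :
    (Nat.choose (s + m + 1 + b) (m + 1 - b) : ℚ) * genCatalan b (s + 1)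
      = (s + 1) / (m + 1)! * (m + 1).choose b * (s + 2 + b).ascFactorial m := by
  have hasc : (s + b + 1)! * (s + 2 + b).ascFactorial m = (s + m + 1 + b)! := by
    rw [show s + 2 + b = s + b + 1 + 1 by omega, Nat.factorial_mul_ascFactorial,
      show s + b + 1 + m = s + m + 1 + b by omega]
  have hfac : (2 * b + (s + 1))! = (2 * b + (s + 1)) * (s + 2 * b)! := by
    rw [show 2 * b + (s + 1) = s + 2 * b + 1 by omega, Nat.factorial_succ]
  rw [genCatalan, Nat.cast_choose ℚ (by omega : m + 1 - b ≤ s + m + 1 + b),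
    Nat.cast_choose ℚ (by omega : b ≤ 2 * b + (s + 1)), Nat.cast_choose ℚ hb,
    show s + m + 1 + b - (m + 1 - b) = s + 2 * b by omega,
    show 2 * b + (s + 1) - b = s + b + 1 by omega, hfac, ← hasc]
  push_cast
  field_simp

theorem stmt_6 (i j : ℕ) (hij : j ≤ i) :
    ∑ k ∈ Finset.Icc j i,
        (-1 : ℚ) ^ (i - k) * (Nat.choose (i + k) (i - k) : ℚ) * genCatalan (k - j) (2 * j + 1)
      = if i = j then 1 else 0 := by
  obtain ⟨n, rfl⟩ := Nat.exists_eq_add_of_le hij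
  rw [← Ico_add_one_right_eq_Icc, sum_Ico_eq_sum_range, show j + n + 1 - j = n + 1 by omega]
  rcases n with _ | m
  · simp [genCatalan]
    positivity
  rw [if_neg (by omega)]
  calc _ = (2 * j + 1) / (m + 1)! * ∑ b ∈ range (m + 1 + 1), (-1 : ℚ) ^ (m + 1 - b) *
          (m + 1).choose b * (ascPochhammer ℚ m).eval ((2 * j + 2 : ℚ) + b) := by
        rw [mul_sum]
        refine sum_congr rfl fun b hb => ?_
        rw [show j + (m + 1) - (j + b) = m + 1 - b by omega,
          show j + (m + 1) + (j + b) = 2 * j + m + 1 + b by omega, Nat.add_sub_cancel_left,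
          mul_assoc, choose_mul_genCatalan (2 * j) m b (by simpa [Nat.lt_succ_iff] using hb),
          Nat.cast_ascFactorial]
        push_cast
        ring
    _ = 0 := by
        rw [sum_range_alternating_choose_mul_eval_eq_zero (by simp [ascPochhammer_natDegree]),
          mul_zero]
end

section
/- For all integers n ≥ 0 and k ≥ 1, the determinant of the n×n matrix over ℚ with entries ((2i+k+1)/(i+j+k))·binom(i+j+k, i-j+1) for 0 ≤ j ≤ i+1 and 0 for j > i+1, 0 ≤ i, j ≤ n-1, equals binom(2n+k-1, n). -/
set_option maxHeartbeats 2000000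

open Finset

noncomputable def fent (k i j : ℕ) : ℚ :=
  if j ≤ i + 1 then
    ((2 * i + k + 1 : ℕ) : ℚ) / ((i + j + k : ℕ) : ℚ) * (Nat.choose (i + j + k) (i + 1 - j) : ℚ)
  else 0

noncomputable def Tt (k n m : ℕ) : ℚ :=
  ((Nat.choose (n + m + k) (n + 1 - m) : ℚ)
    + (if m ≤ n then (Nat.choose (n + m + k - 1) (n - m) : ℚ) else 0))
  * (Nat.choose (2 * m + k - 1) m : ℚ) * (m * (m + k - 1))
  / ((n + 1) * (n + k))

set_option maxHeartbeats 1000000 in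
lemma core1 (a b d F G S M H : ℚ) (ha : 0 ≤ a) (hb : 0 ≤ b) (hd : 0 ≤ d)
    (hF : F ≠ 0) (hG : G ≠ 0) (hS : S ≠ 0) (hM : M ≠ 0) (hH : H ≠ 0) :
    (2 * a + 2 * d + b + 4) / (2 * a + d + b + 2) *
        ((2 * a + d + b + 2) * F / ((d + 2) * ((d + 1) * S) * G)) * (G / (M * H)) =
    ((2 * a + d + b + 2) * F / ((d + 2) * ((d + 1) * S) * G) + F / ((d + 1) * S * G)) *
            (G / (M * H)) * (a * (a + (b + 1) - 1)) /
        ((a + d + 1 + 1) * (a + d + 1 + (b + 1))) +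
      ((2 * a + d + b + 3) * ((2 * a + d + b + 2) * F) /
            ((d + 1) * S * ((2 * a + b + 2) * ((2 * a + b + 1) * G))) +
          (2 * a + d + b + 2) * F / (S * ((2 * a + b + 2) * ((2 * a + b + 1) * G)))) *
          ((2 * a + b + 2) * ((2 * a + b + 1) * G) / ((a + 1) * M * ((a + b + 1) * H))) *
          ((a + 1) * (a + 1 + (b + 1) - 1)) /
        ((a + d + 1 + 1) * (a + d + 1 + (b + 1))) := by
  have h1 : (2 * a + d + b + 2) ≠ 0 := by positivity
  have h2 : (d + 2) ≠ 0 := by positivity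
  have h3 : (d + 1) ≠ 0 := by positivity
  have h4 : (2 * a + b + 2) ≠ 0 := by positivity
  have h5 : (2 * a + b + 1) ≠ 0 := by positivity
  have h6 : (a + 1) ≠ 0 := by positivity
  have h7 : (a + b + 1) ≠ 0 := by positivity
  have h8 : (a + d + 1 + 1) ≠ 0 := by positivity
  have h9 : (a + d + 1 + (b + 1)) ≠ 0 := by positivity
  field_simp
  ring

set_option maxHeartbeats 1000000 in
lemma core2 (a b G M H : ℚ) (ha : 0 ≤ a) (hb : 0 ≤ b)
    (hG : G ≠ 0) (hM : M ≠ 0) (hH : H ≠ 0) :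
    (2 * a + (b + 1) + 1) / (2 * a + b + 1) * (2 * a + b + 1) * (G / (M * H)) =
    (2 * a + b + 1 + 1) * (G / (M * H)) * (a * (a + (b + 1) - 1)) /
        ((a + 1) * (a + (b + 1))) +
      (1 + 0) * ((2 * a + b + 2) * ((2 * a + b + 1) * G) /
            ((a + 1) * M * ((a + b + 1) * H))) *
          ((a + 1) * (a + 1 + (b + 1) - 1)) /
        ((a + 1) * (a + (b + 1))) := by
  have h1 : (2 * a + b + 1) ≠ 0 := by positivity
  have h6 : (a + 1) ≠ 0 := by positivity
  have h7 : (a + b + 1) ≠ 0 := by positivity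
  have h9 : (a + (b + 1)) ≠ 0 := by positivity
  field_simp
  ring


lemma key_s8 (k n m : ℕ) (hk : 1 ≤ k) (hm : m ≤ n) :
    fent k n m * (Nat.choose (2 * m + k - 1) m : ℚ) = Tt k n m + Tt k n (m + 1) := by
  obtain ⟨c, rfl⟩ : ∃ c, k = c + 1 := ⟨k - 1, by omega⟩
  rcases Nat.lt_or_ge m n with h | h
  · -- m < n : write n = m + s + 1
    obtain ⟨s, rfl⟩ : ∃ s, n = m + s + 1 := ⟨n - m - 1, by omega⟩
    rw [fent, if_pos (by omega), Tt, Tt, if_pos (by omega), if_pos (by omega)]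
    have e1 : m + (m + s + 1) + (c + 1) = 2 * m + s + c + 2 := by ring
    have e2 : m + s + 1 + m + (c + 1) = 2 * m + s + c + 2 := by ring
    have e3 : m + s + 1 + 1 - m = s + 2 := by omega
    have e4 : 2 * (m + s + 1) + (c + 1) + 1 = 2 * m + 2 * s + c + 4 := by ring
    have e5 : 2 * m + (c + 1) - 1 = 2 * m + c := by omega
    have e6 : m + s + 1 + m + (c + 1) - 1 = 2 * m + s + c + 1 := by omega
    have e7 : m + s + 1 - m = s + 1 := by omega
    have e8 : m + s + 1 + (m + 1) + (c + 1) = 2 * m + s + c + 3 := by ring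
    have e9 : m + s + 1 + 1 - (m + 1) = s + 1 := by omega
    have e10 : m + s + 1 + (m + 1) + (c + 1) - 1 = 2 * m + s + c + 2 := by omega
    have e11 : m + s + 1 - (m + 1) = s := by omega
    have e12 : 2 * (m + 1) + (c + 1) - 1 = 2 * m + c + 2 := by omega
    have g1 : 2 * m + s + c + 2 - 1 = 2 * m + s + c + 1 := by omega
    have g2 : 2 * m + s + c + 3 - 1 = 2 * m + s + c + 2 := by omega
    simp only [e3, e6, e7, e9, e10, e11, e5, e12, e4, e1, e2, e8, g1, g2]
    rw [Nat.cast_choose ℚ (show s + 2 ≤ 2 * m + s + c + 2 by omega),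
        Nat.cast_choose ℚ (show s + 1 ≤ 2 * m + s + c + 1 by omega),
        Nat.cast_choose ℚ (show m ≤ 2 * m + c by omega),
        Nat.cast_choose ℚ (show s + 1 ≤ 2 * m + s + c + 3 by omega),
        Nat.cast_choose ℚ (show s ≤ 2 * m + s + c + 2 by omega),
        Nat.cast_choose ℚ (show m + 1 ≤ 2 * m + c + 2 by omega)]
    have s1 : 2 * m + s + c + 2 - (s + 2) = 2 * m + c := by omega
    have s2 : 2 * m + s + c + 1 - (s + 1) = 2 * m + c := by omega
    have s3 : 2 * m + c - m = m + c := by omega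
    have s4 : 2 * m + s + c + 3 - (s + 1) = 2 * m + c + 2 := by omega
    have s5 : 2 * m + s + c + 2 - s = 2 * m + c + 2 := by omega
    have s6 : 2 * m + c + 2 - (m + 1) = m + c + 1 := by omega
    simp only [s1, s2, s3, s4, s5, s6]
    have f1 : (2 * m + s + c + 3).factorial
        = (2 * m + s + c + 3) * ((2 * m + s + c + 2) * (2 * m + s + c + 1).factorial) := by
      rw [show 2*m+s+c+3 = (2*m+s+c+2)+1 from rfl, Nat.factorial_succ,
          show 2*m+s+c+2 = (2*m+s+c+1)+1 from rfl, Nat.factorial_succ]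
    have f2 : (2 * m + s + c + 2).factorial
        = (2 * m + s + c + 2) * (2 * m + s + c + 1).factorial := by
      rw [show 2*m+s+c+2 = (2*m+s+c+1)+1 from rfl, Nat.factorial_succ]
    have f3 : (2 * m + c + 2).factorial
        = (2 * m + c + 2) * ((2 * m + c + 1) * (2 * m + c).factorial) := by
      rw [show 2*m+c+2 = (2*m+c+1)+1 from rfl, Nat.factorial_succ,
          show 2*m+c+1 = (2*m+c)+1 from rfl, Nat.factorial_succ]
    have f4 : (s + 2).factorial = (s + 2) * ((s + 1) * s.factorial) := by
      rw [Nat.factorial_succ, Nat.factorial_succ]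
    have f5 : (s + 1).factorial = (s + 1) * s.factorial := Nat.factorial_succ s
    have f6 : (m + 1).factorial = (m + 1) * m.factorial := Nat.factorial_succ m
    have f7 : (m + c + 1).factorial = (m + c + 1) * (m + c).factorial := Nat.factorial_succ _
    simp only [f1, f2, f3, f4, f5, f6, f7]
    have nz1 : ((2 * m + s + c + 1).factorial : ℚ) ≠ 0 := by
      exact_mod_cast Nat.factorial_ne_zero _
    have nz2 : ((2 * m + c).factorial : ℚ) ≠ 0 := by exact_mod_cast Nat.factorial_ne_zero _
    have nz3 : (s.factorial : ℚ) ≠ 0 := by exact_mod_cast Nat.factorial_ne_zero _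
    have nz4 : (m.factorial : ℚ) ≠ 0 := by exact_mod_cast Nat.factorial_ne_zero _
    have nz5 : ((m + c).factorial : ℚ) ≠ 0 := by exact_mod_cast Nat.factorial_ne_zero _
    push_cast
    exact core1 (↑m) (↑c) (↑s) _ _ _ _ _ (Nat.cast_nonneg m) (Nat.cast_nonneg c)
      (Nat.cast_nonneg s) nz1 nz2 nz3 nz4 nz5
  · -- m = n
    obtain rfl : n = m := by omega
    rw [fent, if_pos (by omega), Tt, Tt, if_pos le_rfl, if_neg (by omega)]
    have e2 : n + 1 - n = 1 := by omega
    have e3 : 2 * n + (c + 1) + 1 = 2 * n + c + 2 := by ring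
    have e5 : n + n + (c + 1) - 1 = 2 * n + c := by omega
    have e6 : n - n = 0 := by omega
    have e8 : n + 1 - (n + 1) = 0 := by omega
    have e9 : 2 * (n + 1) + (c + 1) - 1 = 2 * n + c + 2 := by omega
    have e10 : n + (n + 1) + (c + 1) - 1 = 2 * n + c + 1 := by omega
    have e4 : 2 * n + (c + 1) - 1 = 2 * n + c := by omega
    have e1 : n + n + (c + 1) = 2 * n + c + 1 := by ring
    have e7 : n + (n + 1) + (c + 1) = 2 * n + c + 2 := by ring
    have g1 : 2 * n + c + 1 - 1 = 2 * n + c := by omega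
    have g2 : 2 * n + c + 2 - 1 = 2 * n + c + 1 := by omega
    simp only [e2, e5, e6, e8, e9, e4, e1, e7, g1, g2]
    rw [Nat.choose_zero_right, Nat.choose_zero_right, Nat.choose_one_right]
    rw [Nat.cast_choose ℚ (show n ≤ 2 * n + c by omega),
        Nat.cast_choose ℚ (show n + 1 ≤ 2 * n + c + 2 by omega)]
    have s3 : 2 * n + c - n = n + c := by omega
    have s6 : 2 * n + c + 2 - (n + 1) = n + c + 1 := by omega
    rw [s3, s6]
    have f3 : (2 * n + c + 2).factorial
        = (2 * n + c + 2) * ((2 * n + c + 1) * (2 * n + c).factorial) := by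
      rw [show 2*n+c+2 = (2*n+c+1)+1 from rfl, Nat.factorial_succ,
          show 2*n+c+1 = (2*n+c)+1 from rfl, Nat.factorial_succ]
    have f6 : (n + 1).factorial = (n + 1) * n.factorial := Nat.factorial_succ n
    have f7 : (n + c + 1).factorial = (n + c + 1) * (n + c).factorial := Nat.factorial_succ _
    rw [f3, f6, f7]
    have nz2 : ((2 * n + c).factorial : ℚ) ≠ 0 := by exact_mod_cast Nat.factorial_ne_zero _
    have nz4 : (n.factorial : ℚ) ≠ 0 := by exact_mod_cast Nat.factorial_ne_zero _
    have nz5 : ((n + c).factorial : ℚ) ≠ 0 := by exact_mod_cast Nat.factorial_ne_zero _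
    push_cast
    exact core2 (↑n) (↑c) _ _ _ (Nat.cast_nonneg n) (Nat.cast_nonneg c) nz2 nz4 nz5


lemma fent_sup (k : ℕ) (hk : 1 ≤ k) (i : ℕ) : fent k i (i + 1) = 1 := by
  rw [fent, if_pos le_rfl]
  have e : i + 1 - (i + 1) = 0 := by omega
  have e2 : i + (i + 1) + k = 2 * i + k + 1 := by ring
  rw [e, e2, Nat.choose_zero_right]
  have : ((2 * i + k + 1 : ℕ) : ℚ) ≠ 0 := by positivity
  rw [Nat.cast_one, mul_one, div_self this]

lemma fent_zero (k i j : ℕ) (h : i + 1 < j) : fent k i j = 0 := by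
  rw [fent, if_neg (by omega)]

lemma coe_succAbove {n : ℕ} (p : Fin (n + 1)) (j : Fin n) :
    ((p.succAbove j : Fin (n + 1)) : ℕ) = if (j : ℕ) < (p : ℕ) then (j : ℕ) else (j : ℕ) + 1 := by
  rcases lt_or_ge (Fin.castSucc j) p with h | h
  · rw [Fin.succAbove_of_castSucc_lt _ _ h, if_pos (by simpa [Fin.lt_def] using h)]
    simp
  · rw [Fin.succAbove_of_le_castSucc _ _ h, if_neg (by simp [Fin.le_def] at h; omega)]
    simp

lemma det_shift (f : ℕ → ℕ → ℚ) (hsup : ∀ i, f i (i + 1) = 1)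
    (hz : ∀ i j, i + 1 < j → f i j = 0) :
    ∀ n : ℕ, ∀ m : ℕ, m ≤ n →
      (Matrix.of fun i j : Fin n => f (i : ℕ) (if (j : ℕ) < m then (j : ℕ) else (j : ℕ) + 1)).det
        = (Matrix.of fun i j : Fin m => f (i : ℕ) (j : ℕ)).det := by
  intro n
  induction n with
  | zero =>
    intro m hm
    have : m = 0 := by omega
    subst this
    rfl
  | succ n ih =>
    intro m hm
    rcases Nat.eq_or_lt_of_le hm with heq | hlt
    · subst heq
      congr 1
      ext i j
      simp only [Matrix.of_apply]
      rw [if_pos j.isLt]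
    · have hm' : m ≤ n := by omega
      rw [Matrix.det_succ_column _ (Fin.last n)]
      rw [Fintype.sum_eq_single (Fin.last n)]
      · have hlast : ((Fin.last n : Fin (n+1)) : ℕ) = n := rfl
        have hent : (Matrix.of fun i j : Fin (n+1) =>
            f (i : ℕ) (if (j : ℕ) < m then (j : ℕ) else (j : ℕ) + 1)) (Fin.last n) (Fin.last n)
            = 1 := by
          simp only [Matrix.of_apply, hlast, if_neg (by omega : ¬ n < m)]
          exact hsup n
        rw [hent]
        have hsub : ((Matrix.of fun i j : Fin (n+1) =>
            f (i : ℕ) (if (j : ℕ) < m then (j : ℕ) else (j : ℕ) + 1)).submatrix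
              (Fin.last n).succAbove (Fin.last n).succAbove)
            = (Matrix.of fun i j : Fin n =>
                f (i : ℕ) (if (j : ℕ) < m then (j : ℕ) else (j : ℕ) + 1)) := by
          ext i j
          simp [Fin.succAbove_last, Matrix.submatrix_apply]
        rw [hsub, ih m hm', hlast]
        have : (-1 : ℚ) ^ (n + n) = 1 := Even.neg_one_pow ⟨n, by ring⟩
        rw [this, one_mul, one_mul]
      · intro b hb
        have hbv : (b : ℕ) < n := Fin.val_lt_last hb
        have : (Matrix.of fun i j : Fin (n+1) =>
            f (i : ℕ) (if (j : ℕ) < m then (j : ℕ) else (j : ℕ) + 1)) b (Fin.last n) = 0 := by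
          simp only [Matrix.of_apply]
          rw [show ((Fin.last n : Fin (n+1)) : ℕ) = n from rfl, if_neg (by omega : ¬ n < m)]
          exact hz _ _ (by omega)
        rw [this, mul_zero, zero_mul]

lemma scalar (k n : ℕ) (hk : 1 ≤ k) :
    ∑ m ∈ Finset.range (n + 1),
      (-1 : ℚ) ^ (n + m) * fent k n m * (Nat.choose (2 * m + k - 1) m : ℚ)
      = (Nat.choose (2 * (n + 1) + k - 1) (n + 1) : ℚ) := by
  have tele : ∀ m ∈ Finset.range (n + 1),
      (-1 : ℚ) ^ (n + m) * fent k n m * (Nat.choose (2 * m + k - 1) m : ℚ)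
        = (fun m => (-1 : ℚ) ^ (n + 1 - m) * Tt k n m) (m + 1)
          - (fun m => (-1 : ℚ) ^ (n + 1 - m) * Tt k n m) m := by
    intro m hm
    simp only [Finset.mem_range] at hm
    have hmn : m ≤ n := by omega
    have p1 : (-1 : ℚ) ^ (n + 1 - (m + 1)) = (-1 : ℚ) ^ (n - m) := by
      rw [show n + 1 - (m + 1) = n - m by omega]
    have p2 : (-1 : ℚ) ^ (n + 1 - m) = -(-1 : ℚ) ^ (n - m) := by
      rw [show n + 1 - m = (n - m) + 1 by omega, pow_succ]
      ring
    have p3 : (-1 : ℚ) ^ (n + m) = (-1 : ℚ) ^ (n - m) := by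
      rw [show n + m = (n - m) + 2 * m by omega, pow_add, pow_mul]
      norm_num
    simp only [p1, p2, p3]
    rw [mul_assoc, key_s8 k n m hk hmn]
    ring
  rw [Finset.sum_congr rfl tele, Finset.sum_range_sub (fun m => (-1 : ℚ) ^ (n + 1 - m) * Tt k n m)]
  have w0 : (-1 : ℚ) ^ (n + 1 - 0) * Tt k n 0 = 0 := by
    rw [Tt]
    push_cast
    ring
  have wN : (-1 : ℚ) ^ (n + 1 - (n + 1)) * Tt k n (n + 1)
      = (Nat.choose (2 * (n + 1) + k - 1) (n + 1) : ℚ) := by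
    rw [show n + 1 - (n + 1) = 0 by omega, pow_zero, one_mul, Tt]
    rw [if_neg (by omega), show n + 1 - (n + 1) = 0 by omega, Nat.choose_zero_right]
    have hx : ((n : ℚ) + 1) * ((n : ℚ) + (k : ℚ)) ≠ 0 := by
      have h1 : (0 : ℚ) < (n : ℚ) + 1 := by positivity
      have h2 : (0 : ℚ) < (n : ℚ) + (k : ℚ) := by
        have : (1 : ℚ) ≤ (k : ℚ) := by exact_mod_cast hk
        nlinarith
      positivity
    have hy : (((n + 1 : ℕ)) : ℚ) * ((((n + 1 : ℕ)) : ℚ) + (k : ℚ) - 1)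
        = ((n : ℚ) + 1) * ((n : ℚ) + (k : ℚ)) := by push_cast; ring
    rw [hy, mul_div_assoc, div_self hx, mul_one]
    norm_num
  rw [w0, wN, sub_zero]

theorem det_M (k : ℕ) (hk : 1 ≤ k) :
    ∀ n : ℕ, (Matrix.of fun i j : Fin n => fent k (i : ℕ) (j : ℕ)).det
      = (Nat.choose (2 * n + k - 1) n : ℚ) := by
  intro n
  induction n using Nat.strong_induction_on with
  | _ n ih =>
    match n, ih with
    | 0, _ => simp [Matrix.det_fin_zero]
    | Nat.succ n, ih =>
      rw [Matrix.det_succ_row _ (Fin.last n)]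
      have hterm : ∀ j : Fin (n + 1),
          (-1 : ℚ) ^ ((Fin.last n : ℕ) + (j : ℕ))
            * (Matrix.of fun i j : Fin (n+1) => fent k (i : ℕ) (j : ℕ)) (Fin.last n) j
            * ((Matrix.of fun i j : Fin (n+1) => fent k (i : ℕ) (j : ℕ)).submatrix
                (Fin.last n).succAbove j.succAbove).det
          = (-1 : ℚ) ^ (n + (j : ℕ)) * fent k n j
              * (Nat.choose (2 * (j : ℕ) + k - 1) (j : ℕ) : ℚ) := by
        intro j
        have hsub : ((Matrix.of fun i j : Fin (n+1) => fent k (i : ℕ) (j : ℕ)).submatrix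
            (Fin.last n).succAbove j.succAbove)
            = (Matrix.of fun a b : Fin n =>
                fent k (a : ℕ) (if (b : ℕ) < (j : ℕ) then (b : ℕ) else (b : ℕ) + 1)) := by
          ext a b
          simp only [Matrix.submatrix_apply, Matrix.of_apply, Fin.succAbove_last]
          rw [coe_succAbove]
          simp
        rw [hsub, det_shift (fent k) (fent_sup k hk) (fent_zero k) n (j : ℕ) (by omega),
            ih (j : ℕ) (by omega)]
        rfl
      rw [Finset.sum_congr rfl (fun j _ => hterm j)]
      rw [Fin.sum_univ_eq_sum_range (fun m => (-1 : ℚ) ^ (n + m) * fent k n m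
            * (Nat.choose (2 * m + k - 1) m : ℚ))]
      exact scalar k n hk

theorem stmt_8 (n k : ℕ) (hk : 1 ≤ k) :
    Matrix.det (Matrix.of fun i j : Fin n =>
        if (j : ℕ) ≤ (i : ℕ) + 1 then
          (((2 * (i : ℕ) + k + 1 : ℕ) : ℚ) / (((i : ℕ) + (j : ℕ) + k : ℕ) : ℚ)) *
            (Nat.choose ((i : ℕ) + (j : ℕ) + k) ((i : ℕ) + 1 - (j : ℕ)) : ℚ)
        else 0)
      = (Nat.choose (2 * n + k - 1) n : ℚ) := by
  exact det_M k hk n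
end

section
/- For all integers n ≥ 0, r ≥ 1 and k ≥ 1, the following identity holds in ℚ[x]: binom(x-k, n) = ∑_{j=0}^{n} (-1)^{n-j} binom(n+(r-1)j+k-1, n-j) · G_j(x, r), where G_0(x, r) = 1 and G_j(x, r) = (x/j!)·∏_{ℓ=(r-1)j+1}^{rj-1} (x+ℓ) for j ≥ 1 are the Gould polynomials. -/
/-!
Both sides are polynomials in `x`, so it suffices that they agree at `0` and have the same
forward difference `f (x + 1) - f x` at every natural number. By Pascal's rule the difference of
`binom(x - k, n + 1)` is `binom(x - k, n)`, and a direct computation gives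
`G_{j+1}(x + 1, r) - G_{j+1}(x, r) = G_j(x + r, r)`; after reindexing, the difference of the
right-hand side for `(n + 1, k)` is the right-hand side for `(n, k + r)` evaluated at `x + r`,
which by induction on `n` is `binom(x + r - (k + r), n)`. At `x = 0` only the `j = 0` term
survives, and it equals `binom(-k, n + 1)`.
-/

open Polynomial

/-- The polynomial binomial coefficient `binom(y, r) = (1/r!)·∏_{ℓ=0}^{r-1} (y - ℓ)`. -/
noncomputable def polyChoose (y : Polynomial ℚ) (r : ℕ) : Polynomial ℚ :=
  Polynomial.C ((r.factorial : ℚ)⁻¹) * ∏ ℓ ∈ Finset.range r, (y - Polynomial.C (ℓ : ℚ))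

/-- The Gould polynomial `G_n(x, r) = (x/n!)·∏_{ℓ=(r-1)n+1}^{rn-1} (x+ℓ)` for `n ≥ 1`,
with `G_0(x, r) = 1`. -/
noncomputable def gouldPoly (r n : ℕ) : Polynomial ℚ :=
  if n = 0 then 1
  else Polynomial.C ((n.factorial : ℚ)⁻¹) * Polynomial.X *
    ∏ ℓ ∈ Finset.Icc ((r - 1) * n + 1) (r * n - 1), (Polynomial.X + Polynomial.C (ℓ : ℚ))

open Finset

theorem Polynomial.eq_of_eval_zero_eq_of_eval_add_one_sub_eq {R : Type*} [CommRing R] [IsDomain R]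
    [CharZero R] {p q : R[X]} (h₀ : p.eval 0 = q.eval 0)
    (hΔ : ∀ m : ℕ, p.eval ((m : R) + 1) - p.eval (m : R) = q.eval ((m : R) + 1) - q.eval (m : R)) :
    p = q := by
  have heval (m : ℕ) : p.eval (m : R) = q.eval (m : R) := by
    induction m with
    | zero => simpa using h₀
    | succ m ih => push_cast; linear_combination hΔ m + ih
  refine eq_of_infinite_eval_eq p q (Set.Infinite.mono ?_ (Set.infinite_range_of_injective
    Nat.cast_injective))
  rintro _ ⟨m, rfl⟩
  exact heval m

theorem Ring.choose_eq_inv_factorial_mul_prod {K : Type*} [Field K] [CharZero K] (a : K) (n : ℕ) :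
    Ring.choose a n = (n.factorial : K)⁻¹ * ∏ ℓ ∈ range n, (a - ℓ) := by
  rw [Ring.choose_eq_smul, smul_eq_mul, ← aeval_eq_smeval, ← eval_map_algebraMap,
    descPochhammer_map, descPochhammer_eval_eq_prod_range]

theorem Ring.choose_neg_natCast {K : Type*} [Field K] [CharZero K] (k n : ℕ) :
    Ring.choose (-(k : K)) n = (-1) ^ n * (n + k - 1).choose n := by
  rw [Ring.choose_neg]
  rcases Nat.eq_zero_or_pos (n + k) with h | h
  · obtain ⟨rfl, rfl⟩ : n = 0 ∧ k = 0 := by omega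
    simp
  · have hcast : (k : K) + n - 1 = ((n + k - 1 : ℕ) : K) := by
      push_cast [Nat.cast_sub (by omega : 1 ≤ n + k)]; ring
    rw [hcast, Ring.choose_natCast, Units.smul_def, Int.coe_negOnePow_natCast, zsmul_eq_mul]
    push_cast; ring

theorem eval_polyChoose (y : ℚ[X]) (n : ℕ) (a : ℚ) :
    (polyChoose y n).eval a = Ring.choose (y.eval a) n := by
  simp [polyChoose, eval_prod, Ring.choose_eq_inv_factorial_mul_prod]

@[simp]
theorem gouldPoly_zero (r : ℕ) : gouldPoly r 0 = 1 := rfl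

theorem eval_gouldPoly_zero (r j : ℕ) : (gouldPoly r j).eval 0 = if j = 0 then 1 else 0 := by
  split_ifs with hj <;> simp [gouldPoly, hj]

theorem eval_gouldPoly_succ {r : ℕ} (hr : 1 ≤ r) (t : ℕ) (x : ℚ) :
    (gouldPoly r (t + 1)).eval x
      = ((t + 1).factorial : ℚ)⁻¹ * x * ∏ i ∈ range t, (x + ((r - 1) * (t + 1) + 1 + i : ℕ)) := by
  have htop : r * (t + 1) - 1 + 1 = (r - 1) * (t + 1) + 1 + t := by
    obtain ⟨s, rfl⟩ : ∃ s, r = s + 1 := ⟨r - 1, by omega⟩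
    rw [Nat.add_sub_cancel, Nat.sub_add_cancel (by positivity : 0 < (s + 1) * (t + 1))]
    ring
  simp only [gouldPoly, Nat.add_one_ne_zero, if_false, eval_mul, eval_C, eval_X, eval_prod,
    eval_add, ← Ico_add_one_right_eq_Icc, prod_Ico_eq_prod_range, htop,
    Nat.add_sub_cancel_left]

theorem eval_gouldPoly_succ_add_one_sub {r : ℕ} (hr : 1 ≤ r) (j : ℕ) (x : ℚ) :
    (gouldPoly r (j + 1)).eval (x + 1) - (gouldPoly r (j + 1)).eval x
      = (gouldPoly r j).eval (x + r) := by
  cases j with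
  | zero => simp [gouldPoly]
  | succ t =>
    obtain ⟨s, rfl⟩ : ∃ s, r = s + 1 := ⟨r - 1, by omega⟩
    simp only [eval_gouldPoly_succ hr, Nat.add_sub_cancel]
    set a : ℚ := ((s * (t + 1 + 1) + 1 : ℕ) : ℚ)
    set Q := ∏ i ∈ range t, (x + a + 1 + i)
    have hx₁ : ∏ i ∈ range (t + 1), (x + 1 + ((s * (t + 1 + 1) + 1 + i : ℕ) : ℚ))
        = Q * (x + a + 1 + t) := by
      rw [prod_range_succ]; push_cast [a, Q]; ring_nf
    have hx : ∏ i ∈ range (t + 1), (x + ((s * (t + 1 + 1) + 1 + i : ℕ) : ℚ)) = (x + a) * Q := by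
      rw [prod_range_succ']; push_cast [a, Q]; ring_nf
    have hxr : ∏ i ∈ range t, (x + ((s + 1 : ℕ) : ℚ) + ((s * (t + 1) + 1 + i : ℕ) : ℚ)) = Q := by
      push_cast [a, Q]; exact prod_congr rfl fun i _ => by ring
    rw [hx₁, hx, hxr, Nat.factorial_succ (t + 1)]
    -- `(x + 1) (x + a + 1 + t) - x (x + a) = (t + 2) (x + s + 1)` since `a = s (t + 2) + 1`
    push_cast [a]
    field_simp
    ring

noncomputable def gouldExpansion (r n k : ℕ) : ℚ[X] :=
  ∑ j ∈ range (n + 1),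
    C ((-1 : ℚ) ^ (n - j) * ((n + (r - 1) * j + k - 1).choose (n - j) : ℚ)) * gouldPoly r j

theorem eval_gouldExpansion_zero (r n k : ℕ) :
    (gouldExpansion r n k).eval 0 = (-1) ^ n * ((n + k - 1).choose n : ℚ) := by
  simp [gouldExpansion, eval_finsetSum, eval_gouldPoly_zero]

theorem eval_gouldExpansion_succ_add_one_sub {r : ℕ} (hr : 1 ≤ r) (n k : ℕ) (x : ℚ) :
    (gouldExpansion r (n + 1) k).eval (x + 1) - (gouldExpansion r (n + 1) k).eval x
      = (gouldExpansion r n (k + r)).eval (x + r) := by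
  simp only [gouldExpansion, eval_finsetSum, eval_mul, eval_C, ← sum_sub_distrib, ← mul_sub]
  rw [sum_range_succ', gouldPoly_zero, eval_one, eval_one, sub_self, mul_zero, add_zero]
  refine sum_congr rfl fun j _ => ?_
  have hupper : n + 1 + (r - 1) * (j + 1) + k - 1 = n + (r - 1) * j + (k + r) - 1 := by
    rw [mul_add_one]; omega
  rw [eval_gouldPoly_succ_add_one_sub hr, hupper, Nat.add_sub_add_right]

theorem polyChoose_X_sub_natCast_eq_gouldExpansion {r : ℕ} (hr : 1 ≤ r) (n k : ℕ) :
    polyChoose (X - C (k : ℚ)) n = gouldExpansion r n k := by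
  induction n generalizing k with
  | zero => simp [polyChoose, gouldExpansion, gouldPoly]
  | succ n ih =>
    refine eq_of_eval_zero_eq_of_eval_add_one_sub_eq ?_ fun m => ?_
    · rw [eval_polyChoose, eval_gouldExpansion_zero, ← Ring.choose_neg_natCast]
      simp
    · rw [eval_gouldExpansion_succ_add_one_sub hr, ← ih, eval_polyChoose, eval_polyChoose,
        eval_polyChoose]
      simp only [eval_sub, eval_X, eval_C]
      rw [add_sub_right_comm, Ring.choose_succ_succ, add_sub_cancel_right]
      congr 1
      push_cast
      ring

theorem stmt_10_general (n r k : ℕ) (hr : 1 ≤ r) :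
    polyChoose (Polynomial.X - Polynomial.C (k : ℚ)) n
      = ∑ j ∈ Finset.range (n + 1),
          Polynomial.C ((-1 : ℚ) ^ (n - j) * (Nat.choose (n + (r - 1) * j + k - 1) (n - j) : ℚ)) *
            gouldPoly r j :=
  polyChoose_X_sub_natCast_eq_gouldExpansion hr n k

theorem stmt_10 (n r k : ℕ) (hr : 1 ≤ r) (hk : 1 ≤ k) :
    polyChoose (Polynomial.X - Polynomial.C (k : ℚ)) n
      = ∑ j ∈ Finset.range (n + 1),
          Polynomial.C ((-1 : ℚ) ^ (n - j) * (Nat.choose (n + (r - 1) * j + k - 1) (n - j) : ℚ)) *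
            gouldPoly r j :=
  stmt_10_general n r k hr
end

section
/- For all integers n ≥ 0, r ≥ 1 and k ≥ 1, the determinant of the n×n matrix over ℚ with entries binom(i+(r-1)j+k, i-j+1) for 0 ≤ j ≤ i+1 and 0 for j > i+1, 0 ≤ i, j ≤ n-1, equals (k/(rn+k))·binom(rn+k, n). -/
/-!
The matrix is lower Hessenberg with ones on the superdiagonal, so its leading principal minors
`d n` are pinned down by `d 0 = 1` and the row recurrences `∑ j, (-1)^j a i j d j = 0`: with
`u = ((-1)^j d j)`, `M u` is a multiple of the last basis vector, and the first entry of
`adj M (M u) = det M • u` reads off `det M`. It remains to check these recurrences for the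
Fuss–Catalan numbers `B k m = k / (r m + k) * C(r m + k, m)`. Pascal's rule together with
`B (k + 1) (m + 1) = B k (m + 1) + B (k + r) m` gives
`S (k + 1) (n + 1) = S (k + 1) n + S k (n + 1) - S (k + r) n` for the row sums `S k n`, which
therefore vanish by induction on `n` and `k`.
-/

open Finset Matrix

theorem sum_range_eq_zero_of_hessenberg {R : Type*} [CommRing R] (f : ℕ → ℕ → R) (d : ℕ → R)
    (hf_zero : ∀ i j, i + 1 < j → f i j = 0)
    {i N : ℕ} (hrow : ∑ j ∈ range (i + 2), (-1) ^ j * f i j * d j = 0) (hiN : i + 2 ≤ N) :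
    ∑ j ∈ range N, (-1) ^ j * f i j * d j = 0 := by
  rw [← hrow]
  refine (sum_subset (range_subset_range.mpr hiN) fun j _ hj => ?_).symm
  rw [hf_zero i j (by simp at hj; omega), mul_zero, zero_mul]

theorem det_hessenberg_eq {R : Type*} [CommRing R] (f : ℕ → ℕ → R) (d : ℕ → R)
    (hf_zero : ∀ i j, i + 1 < j → f i j = 0) (hf_one : ∀ i, f i (i + 1) = 1) (hd : d 0 = 1)
    (hrec : ∀ i, ∑ j ∈ range (i + 2), (-1) ^ j * f i j * d j = 0) :
    ∀ n, (of fun i j : Fin n => f i j).det = d n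
  | 0 => by simp [hd]
  | n + 1 => by
    set M : Matrix (Fin (n + 1)) (Fin (n + 1)) R := of fun i j => f i j
    set u : Fin (n + 1) → R := fun j => (-1) ^ (j : ℕ) * d j
    have hMu : M *ᵥ u = Pi.single (Fin.last n) ((-1) ^ n * d (n + 1)) := by
      funext i
      have hrow : (M *ᵥ u) i = ∑ j ∈ range (n + 1), (-1) ^ j * f i j * d j := by
        rw [← Fin.sum_univ_eq_sum_range (fun j => (-1) ^ j * f i j * d j)]
        simp only [mulVec, dotProduct]
        exact sum_congr rfl fun j _ => by simp only [M, u, of_apply]; ring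
      rw [hrow]
      rcases (Fin.le_last i).lt_or_eq with hi | rfl
      · rw [Pi.single_eq_of_ne hi.ne, sum_range_eq_zero_of_hessenberg f d hf_zero (hrec i)
          (by simpa [Fin.lt_def] using hi)]
      · have h := hrec n
        rw [sum_range_succ, hf_one] at h
        rw [Pi.single_eq_same, Fin.val_last]
        linear_combination h
    -- the cofactor of `(last, 0)` is a unit lower triangular determinant
    have hadj : M.adjugate 0 (Fin.last n) = (-1) ^ n := by
      rw [adjugate_fin_succ_eq_det_submatrix, det_of_isLowerTriangular]
      · simp [M, hf_one, Fin.succAbove_last]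
      · intro i j hij
        simp only [submatrix_apply, of_apply, M, Fin.succAbove_last, Fin.succAbove_zero]
        rw [OrderDual.toDual_lt_toDual] at hij
        exact hf_zero _ _ (by simp only [Fin.val_castSucc, Fin.val_succ]; omega)
    have h := congrFun (congrArg (· *ᵥ u) (adjugate_mul M)) 0
    simp only [← mulVec_mulVec, hMu, mulVec_single, smul_mulVec, one_mulVec] at h
    simpa [u, hadj, hd, ← mul_assoc, ← pow_add, ← two_mul, pow_mul] using h.symm

/-- With `r = s + 1` this is `k / (r m + k) * C(r m + k, m)`, written without division as
`C(r m + k, m) - r C(r m + k - 1, m - 1)`; for `k = 0` it is `1` at `m = 0` and `0` otherwise. -/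
def fussCatalan (s k : ℕ) : ℕ → ℚ
  | 0 => 1
  | m + 1 => ((s + 1) * (m + 1) + k).choose (m + 1) - (s + 1) * (s * (m + 1) + m + k).choose m

@[simp]
theorem fussCatalan_zero_right (s k : ℕ) : fussCatalan s k 0 = 1 := rfl

theorem cast_mul_fussCatalan_succ (s k m : ℕ) :
    (((s + 1) * (m + 1) + k : ℕ) : ℚ) * fussCatalan s k (m + 1)
      = k * ((s + 1) * (m + 1) + k).choose (m + 1) := by
  have h := Nat.add_one_mul_choose_eq (s * (m + 1) + m + k) m
  rw [show s * (m + 1) + m + k + 1 = (s + 1) * (m + 1) + k by ring] at h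
  have h' : (((s + 1) * (m + 1) + k : ℕ) : ℚ) * (s * (m + 1) + m + k).choose m
      = ((s + 1) * (m + 1) + k).choose (m + 1) * (m + 1) := by exact_mod_cast h
  simp only [fussCatalan]
  push_cast at h' ⊢
  linear_combination (-(s + 1 : ℚ)) * h'

theorem fussCatalan_zero_succ (s m : ℕ) : fussCatalan s 0 (m + 1) = 0 := by
  have h := cast_mul_fussCatalan_succ s 0 m
  rw [Nat.cast_zero, zero_mul, mul_eq_zero] at h
  exact h.resolve_left (by positivity)

theorem fussCatalan_one (s k : ℕ) : fussCatalan s k 1 = k := by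
  simp [fussCatalan]

theorem fussCatalan_succ_succ (s k m : ℕ) :
    fussCatalan s (k + 1) (m + 1) = fussCatalan s k (m + 1) + fussCatalan s (k + s + 1) m := by
  cases m with
  | zero => simp [fussCatalan_one]
  | succ m =>
    simp only [fussCatalan]
    rw [show (s + 1) * (m + 1 + 1) + (k + 1) = (s + 1) * (m + 2) + k + 1 by ring,
      show s * (m + 1 + 1) + (m + 1) + (k + 1) = s * (m + 2) + (m + 1) + k + 1 by ring,
      show (s + 1) * (m + 1) + (k + s + 1) = (s + 1) * (m + 2) + k by ring,
      show s * (m + 1) + m + (k + s + 1) = s * (m + 2) + (m + 1) + k by ring,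
      Nat.choose_succ_succ', Nat.choose_succ_succ' (s * (m + 2) + (m + 1) + k)]
    push_cast
    ring

theorem fussCatalan_eq (s : ℕ) {k : ℕ} (hk : 0 < k) (m : ℕ) :
    fussCatalan s k m = k / (((s + 1) * m + k : ℕ) : ℚ) * ((s + 1) * m + k).choose m := by
  cases m with
  | zero => simp [hk.ne']
  | succ m =>
    rw [div_mul_eq_mul_div, eq_div_iff (by positivity), mul_comm, cast_mul_fussCatalan_succ]

/-- Row `n` of the Hessenberg recurrence, indexed by `p = (m, n + 1 - m)`. -/
def fussCatalanAltSum (s k n : ℕ) : ℚ :=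
  ∑ p ∈ antidiagonal (n + 1), (-1) ^ p.1 * fussCatalan s k p.1 * (s * p.1 + n + k).choose p.2

theorem fussCatalanAltSum_succ_succ (s k n : ℕ) :
    fussCatalanAltSum s (k + 1) (n + 1)
      = fussCatalanAltSum s (k + 1) n + fussCatalanAltSum s k (n + 1)
        - fussCatalanAltSum s (k + s + 1) n := by
  set g : ℕ → ℚ := fun m => (-1) ^ m * fussCatalan s (k + 1) m
  have pascal : fussCatalanAltSum s (k + 1) (n + 1) = fussCatalanAltSum s (k + 1) n
      + ∑ p ∈ antidiagonal (n + 2), g p.1 * (s * p.1 + n + (k + 1)).choose p.2 := by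
    rw [fussCatalanAltSum, fussCatalanAltSum, Nat.sum_antidiagonal_succ',
      Nat.sum_antidiagonal_succ' (n := n + 1)]
    simp only [Nat.choose_zero_right, show ∀ m, s * m + (n + 1) + (k + 1) = s * m + n + (k + 1) + 1
      from fun m => by ring, Nat.choose_succ_succ', Nat.cast_add, mul_add, sum_add_distrib, g]
    ring
  have shift : ∑ p ∈ antidiagonal (n + 2), g p.1 * (s * p.1 + n + (k + 1)).choose p.2
      = fussCatalanAltSum s k (n + 1) - fussCatalanAltSum s (k + s + 1) n := by
    rw [fussCatalanAltSum, fussCatalanAltSum, Nat.sum_antidiagonal_succ,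
      Nat.sum_antidiagonal_succ (n := n + 1), add_sub_assoc, ← sum_sub_distrib]
    congr 1
    · simp [g, add_right_comm n 1 k, add_assoc]
    · refine sum_congr rfl fun p _ => ?_
      rw [show s * (p.1 + 1) + (n + 1) + k = s * (p.1 + 1) + n + (k + 1) by ring,
        show s * p.1 + n + (k + s + 1) = s * (p.1 + 1) + n + (k + 1) by ring]
      simp only [g, fussCatalan_succ_succ]
      ring
  rw [pascal, shift]
  ring

theorem fussCatalanAltSum_eq_zero (s : ℕ) : ∀ n k, fussCatalanAltSum s k n = 0
  | 0, k => by
    simp [fussCatalanAltSum, Nat.sum_antidiagonal_succ, fussCatalan_one]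
  | n + 1, 0 => by
    rw [fussCatalanAltSum, Nat.sum_antidiagonal_succ]
    simp [fussCatalan_zero_succ]
  | n + 1, k + 1 => by
    rw [fussCatalanAltSum_succ_succ, fussCatalanAltSum_eq_zero s n, fussCatalanAltSum_eq_zero s n,
      fussCatalanAltSum_eq_zero s (n + 1) k]
    ring

theorem stmt_11 (n r k : ℕ) (hr : 1 ≤ r) (hk : 1 ≤ k) :
    Matrix.det (Matrix.of fun i j : Fin n =>
        if (j : ℕ) ≤ (i : ℕ) + 1 then
          (Nat.choose ((i : ℕ) + (r - 1) * (j : ℕ) + k) ((i : ℕ) + 1 - (j : ℕ)) : ℚ)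
        else 0)
      = ((k : ℚ) / ((r * n + k : ℕ) : ℚ)) * (Nat.choose (r * n + k) n : ℚ) := by
  obtain ⟨s, rfl⟩ : ∃ s, r = s + 1 := ⟨r - 1, by omega⟩
  rw [Nat.add_sub_cancel, ← fussCatalan_eq s hk]
  refine det_hessenberg_eq
    (fun i j : ℕ => if j ≤ i + 1 then ((i + s * j + k).choose (i + 1 - j) : ℚ) else 0)
    (fussCatalan s k) (fun i j hij => if_neg (not_le.mpr hij)) (fun i => by simp) rfl
    (fun i => ?_) n
  rw [← fussCatalanAltSum_eq_zero s i k, fussCatalanAltSum,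
    Nat.sum_antidiagonal_eq_sum_range_succ_mk]
  refine sum_congr rfl fun j hj => ?_
  rw [if_pos (by simp at hj; omega), show i + s * j + k = s * j + i + k by ring]
  ring
end

section
/- For all integers n ≥ 0 and m ≥ 0, the determinant of the n×n matrix with entries binom(i+j+m, i-j+m) (equal to binom(i+j+m, 2j), which vanishes when j > i+m), 0 ≤ i, j ≤ n-1, equals both the product ∏_{j=1}^{n-1} ( j!·(2m+2j)! ) / ( (2j)!·(2m+j)! ) and the m×m Hankel determinant det(C_{n+i+j})_{i,j=0}^{m-1} of shifted Catalan numbers. -/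
/-!
Both determinants are evaluated by one condensation step. If the first column of `f s` satisfies
`f s (i + 1) 0 = α i * f s i 0`, subtracting `α i` times row `i` from row `i + 1` clears it; when
the block left over is the next matrix `f (s + 1)` of the family rescaled by `β i * γ j`, the
determinant of `f s` is `f s 0 0 * ∏ β k * γ k` times that of `f (s + 1)`, one size smaller.
The binomial matrices `binom(i + j + s + d, 2j + s)` and the Hankel matrices of
`(2s + 1) (2u)! / ((u + s + 1)! u!)` (the Catalan numbers for `s = 0`) are such families, so both
determinants are explicit products of factorial ratios. The Hankel product runs over `m` factors
and the binomial one over `n`; they agree because both satisfy the same recursion in `m`.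
-/

open Finset Matrix Nat

section RowReduction

variable {R : Type*} [CommRing R]

theorem det_succ_eq_of_row_reduction (N : ℕ) (f g : ℕ → ℕ → R) (α β γ : ℕ → R)
    (hcol : ∀ i, f (i + 1) 0 = α i * f i 0)
    (hrow : ∀ i j, f (i + 1) (j + 1) - α i * f i (j + 1) = β i * γ j * g i j) :
    (of fun i j : Fin (N + 1) => f i j).det
      = f 0 0 * (∏ k ∈ range N, β k * γ k) * (of fun i j : Fin N => g i j).det := by
  let B : Matrix (Fin (N + 1)) (Fin (N + 1)) R :=
    of fun i j => Fin.cases (f 0 j) (fun i : Fin N => f (i + 1) j - α i * f i j) i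
  have hB : (of fun i j : Fin (N + 1) => f i j).det = B.det :=
    det_eq_of_forall_row_eq_smul_add_pred (fun i => α i) (fun _ => rfl) (fun i j => by simp [B])
  have hB_col : B.det = f 0 0 * (B.submatrix Fin.succ Fin.succ).det := by
    rw [det_succ_column_zero, Fin.sum_univ_succ]
    simp [B, hcol]
  have hB_sub : B.submatrix Fin.succ Fin.succ = of fun i j : Fin N => β i * (γ j * g i j) := by
    ext i j
    simp [B, hrow, mul_assoc]
  have h_rows := det_mul_column (fun i : Fin N => β i) (of fun i j : Fin N => γ j * g i j)
  have h_cols := det_mul_row (fun j : Fin N => γ j) (of fun i j : Fin N => g i j)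
  simp only [of_apply] at h_rows h_cols
  rw [hB, hB_col, hB_sub, h_rows, h_cols, prod_mul_distrib,
    Fin.prod_univ_eq_prod_range (fun k => β k), Fin.prod_univ_eq_prod_range (fun k => γ k)]
  ring

theorem det_eq_prod_of_row_reduction (f : ℕ → ℕ → ℕ → R) (α β γ ρ : ℕ → ℕ → R)
    (hcol : ∀ s i, f s (i + 1) 0 = α s i * f s i 0)
    (hrow : ∀ s i j,
      f s (i + 1) (j + 1) - α s i * f s i (j + 1) = β s i * γ s j * f (s + 1) i j)
    (hρ_zero : ∀ s, ρ s 0 = f s 0 0)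
    (hρ_succ : ∀ s k, ρ s (k + 1) = β s k * γ s k * ρ (s + 1) k) (n s : ℕ) :
    (of fun i j : Fin n => f s i j).det = ∏ k ∈ range n, ρ s k := by
  induction n generalizing s with
  | zero => simp
  | succ n ih =>
    rw [det_succ_eq_of_row_reduction n (f s) (f (s + 1)) (α s) (β s) (γ s) (hcol s) (hrow s),
      ih, prod_range_succ', hρ_zero]
    simp only [hρ_succ, prod_mul_distrib]
    ring

end RowReduction

theorem cast_choose_succ_right_mul {R : Type*} [CommRing R] (a k : ℕ) :
    (a.choose (k + 1) : R) * (k + 1) = a.choose k * ((a : R) - k) := by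
  rcases le_or_gt k a with h | h
  · have := congrArg (Nat.cast (R := R)) (Nat.choose_succ_right_eq a k)
    push_cast [Nat.cast_sub h] at this
    exact this
  · simp [Nat.choose_eq_zero_of_lt h, Nat.choose_eq_zero_of_lt (Nat.lt_succ_of_lt h)]

def shiftedChoose (d s i j : ℕ) : ℚ := (i + j + s + d).choose (2 * j + s)

theorem shiftedChoose_succ_zero (d s i : ℕ) :
    shiftedChoose d s (i + 1) 0 = (i + s + d + 1) / (i + d + 1) * shiftedChoose d s i 0 := by
  have h := congrArg (Nat.cast (R := ℚ)) (Nat.choose_mul_succ_eq (i + s + d) s)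
  rw [show i + s + d + 1 - s = i + d + 1 by omega] at h
  simp only [shiftedChoose, show i + 1 + 0 + s + d = i + s + d + 1 by omega, add_zero, mul_zero,
    zero_add]
  push_cast at h ⊢
  field_simp
  linear_combination -h

theorem shiftedChoose_succ_succ (d s i j : ℕ) :
    shiftedChoose d s (i + 1) (j + 1) - (i + s + d + 1) / (i + d + 1) * shiftedChoose d s i (j + 1)
      = (2 * i + 2 * d + s + 2) / (i + d + 1) * ((j + 1) / (2 * j + s + 2))
        * shiftedChoose d (s + 1) i j := by
  set a := i + j + s + d + 1
  set b := 2 * j + s + 1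
  have h_pascal := congrArg (Nat.cast (R := ℚ)) (Nat.choose_succ_succ' a b)
  have h_ratio := cast_choose_succ_right_mul (R := ℚ) a b
  simp only [shiftedChoose, show i + 1 + (j + 1) + s + d = a + 1 by omega,
    show 2 * (j + 1) + s = b + 1 by omega, show i + (j + 1) + s + d = a by omega,
    show i + j + (s + 1) + d = a by omega, show 2 * j + (s + 1) = b by omega]
  push_cast [a, b] at h_pascal h_ratio ⊢
  field_simp
  linear_combination (i + d + 1 : ℚ) * (2 * j + s + 2) * h_pascal - s * h_ratio

noncomputable def binomialFactor (d s k : ℕ) : ℚ :=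
  ((d + s + k)! * (2 * d + s + 2 * k)! * k ! : ℚ) / ((2 * d + s + k)! * (s + 2 * k)! * (d + k)!)

theorem binomialFactor_zero (d s : ℕ) : binomialFactor d s 0 = shiftedChoose d s 0 0 := by
  simp only [shiftedChoose, binomialFactor, add_zero, mul_zero, zero_add, factorial_zero,
    Nat.cast_one, mul_one, Nat.cast_add_choose]
  rw [add_comm d s]
  field_simp

theorem binomialFactor_succ (d s k : ℕ) :
    binomialFactor d s (k + 1)
      = (2 * k + 2 * d + s + 2) / (k + d + 1) * ((k + 1) / (2 * k + s + 2))
        * binomialFactor d (s + 1) k := by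
  simp only [binomialFactor, mul_add, mul_one, ← add_assoc, add_right_comm _ 1 k,
    add_right_comm _ 1 (2 * k), factorial_succ, Nat.cast_mul, Nat.cast_add, Nat.cast_one,
    Nat.cast_ofNat]
  field_simp
  ring

theorem det_shiftedChoose (d n s : ℕ) :
    (of fun i j : Fin n => shiftedChoose d s i j).det = ∏ k ∈ range n, binomialFactor d s k :=
  det_eq_prod_of_row_reduction (shiftedChoose d) _ _ _ (binomialFactor d)
    (shiftedChoose_succ_zero d) (shiftedChoose_succ_succ d) (binomialFactor_zero d)
    (binomialFactor_succ d) n s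

noncomputable def hankelEntry (s u : ℕ) : ℚ := (2 * s + 1) * (2 * u)! / ((u + s + 1)! * u !)

theorem hankelEntry_zero_left (u : ℕ) : hankelEntry 0 u = catalan u := by
  have h := congrArg (Nat.cast (R := ℚ)) (succ_mul_catalan_eq_centralBinom u)
  rw [centralBinom, two_mul, Nat.cast_add_choose, ← two_mul] at h
  push_cast at h
  simp only [hankelEntry, Nat.cast_zero, mul_zero, zero_add, add_zero, factorial_succ]
  field_simp at h ⊢
  push_cast
  linear_combination -h

theorem hankelEntry_succ (s u : ℕ) :
    hankelEntry s (u + 1) = (4 * u + 2) / (u + s + 2) * hankelEntry s u := by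
  simp only [hankelEntry, mul_add, mul_one, add_right_comm _ 1 s, factorial_succ, Nat.cast_mul,
    Nat.cast_add, Nat.cast_one, Nat.cast_ofNat]
  field_simp
  ring

theorem hankelEntry_succ_left (s u : ℕ) :
    hankelEntry (s + 1) u = (2 * s + 3) / ((2 * s + 1) * (u + s + 2)) * hankelEntry s u := by
  simp only [hankelEntry, ← add_assoc, factorial_succ, Nat.cast_mul, Nat.cast_add, Nat.cast_one]
  field_simp
  ring

theorem hankelEntry_row_reduction (s w j : ℕ) :
    hankelEntry s (w + j + 2) - (4 * w + 2) / (w + s + 2) * hankelEntry s (w + j + 1)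
      = (4 * s + 2) / (w + s + 2) * (j + 1) * hankelEntry (s + 1) (w + j + 1) := by
  rw [hankelEntry_succ s (w + j + 1), hankelEntry_succ_left]
  push_cast
  field_simp
  ring

noncomputable def hankelFactor (ν s r : ℕ) : ℚ :=
  ((2 * s + 2 * r + 1) * (2 * ν + 2 * s + 2 * r)! * (2 * s + 2 * r)! * s ! * r !
      * (ν + 2 * s + r)! : ℚ)
    / ((ν + 2 * s + 2 * r + 1)! * (ν + s + r)! * (2 * s)! * (s + r)! * (ν + 2 * s + 2 * r)!)

theorem hankelFactor_zero (ν s : ℕ) : hankelFactor ν s 0 = hankelEntry s (ν + s) := by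
  simp only [hankelFactor, hankelEntry, mul_zero, add_zero, factorial_zero, Nat.cast_zero,
    Nat.cast_one, mul_one]
  rw [show ν + s + s + 1 = ν + 2 * s + 1 by ring, mul_add]
  field_simp

theorem hankelFactor_succ (ν s r : ℕ) :
    hankelFactor ν s (r + 1)
      = (4 * s + 2) / ((ν + s + r : ℕ) + s + 2) * (r + 1) * hankelFactor ν (s + 1) r := by
  simp only [hankelFactor, mul_add, mul_one, ← add_assoc, add_right_comm _ 1 r,
    add_right_comm _ 2 (2 * r), factorial_succ, Nat.cast_mul, Nat.cast_add, Nat.cast_one,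
    Nat.cast_ofNat]
  field_simp
  ring

theorem det_hankelEntry (ν m s : ℕ) :
    (of fun i j : Fin m => hankelEntry s (ν + s + i + j)).det
      = ∏ r ∈ range m, hankelFactor ν s r :=
  det_eq_prod_of_row_reduction (fun s i j => hankelEntry s (ν + s + i + j))
    (fun s i => (4 * (ν + s + i : ℕ) + 2) / ((ν + s + i : ℕ) + s + 2))
    (fun s i => (4 * s + 2) / ((ν + s + i : ℕ) + s + 2)) (fun _ j => j + 1) (hankelFactor ν)
    (fun s i => hankelEntry_succ s (ν + s + i))
    (fun s i j => by
      rw [show ν + s + (i + 1) + (j + 1) = ν + s + i + j + 2 by ring,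
        show ν + s + i + (j + 1) = ν + s + i + j + 1 by ring,
        show ν + (s + 1) + i + j = ν + s + i + j + 1 by ring]
      exact hankelEntry_row_reduction s (ν + s + i) j)
    (hankelFactor_zero ν) (hankelFactor_succ ν) m s

noncomputable def detFactor (m k : ℕ) : ℚ :=
  (k ! * (2 * m + 2 * k)! : ℚ) / ((2 * k)! * (2 * m + k)!)

theorem binomialFactor_eq_detFactor (m k : ℕ) : binomialFactor m 0 k = detFactor m k := by
  simp only [binomialFactor, detFactor, add_zero, zero_add]
  field_simp

theorem hankelFactor_unshifted (ν r : ℕ) :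
    hankelFactor ν 0 r
      = ((2 * r + 1)! * (2 * r + 2 * ν)! : ℚ) / ((2 * r + ν + 1)! * (2 * r + ν)!) := by
  simp only [hankelFactor, mul_zero, add_zero, zero_add, factorial_zero, Nat.cast_zero,
    Nat.cast_one, mul_one, factorial_succ (2 * r), Nat.cast_mul, Nat.cast_add, Nat.cast_ofNat]
  rw [add_comm (2 * ν), add_comm ν (2 * r)]
  field_simp

theorem prod_range_detFactor_succ_left (m n : ℕ) :
    ∏ k ∈ range n, detFactor (m + 1) k
      = hankelFactor n 0 m * ∏ k ∈ range n, detFactor m k := by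
  induction n with
  | zero =>
    rw [prod_range_zero, prod_range_zero, hankelFactor_unshifted]
    field_simp
  | succ n ih =>
    rw [prod_range_succ, prod_range_succ, ih]
    simp only [detFactor, hankelFactor_unshifted, mul_add, mul_one, ← add_assoc,
      add_right_comm _ 2 (2 * n), add_right_comm _ 2 n, factorial_succ, Nat.cast_mul,
      Nat.cast_add, Nat.cast_one, Nat.cast_ofNat]
    field_simp

theorem prod_range_hankelFactor (n m : ℕ) :
    ∏ r ∈ range m, hankelFactor n 0 r = ∏ k ∈ range n, detFactor m k := by
  induction m with
  | zero =>
    refine (prod_eq_one fun k _ => ?_).symm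
    simp only [detFactor, mul_zero, zero_add]
    field_simp
  | succ m ih => rw [prod_range_succ, ih, prod_range_detFactor_succ_left, mul_comm]

theorem prod_Icc_detFactor (m n : ℕ) :
    ∏ k ∈ Icc 1 (n - 1), detFactor m k = ∏ k ∈ range n, detFactor m k := by
  refine prod_subset (fun k hk => by simp only [mem_Icc, mem_range] at hk ⊢; omega)
    fun k hk hk' => ?_
  obtain rfl : k = 0 := by simp only [mem_Icc, mem_range] at hk hk'; omega
  simp [detFactor, factorial_ne_zero]

theorem stmt_12 (n m : ℕ) :
    Matrix.det (Matrix.of fun i j : Fin n =>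
          (Nat.choose ((i : ℕ) + (j : ℕ) + m) (2 * (j : ℕ)) : ℚ))
        = ∏ j ∈ Finset.Icc 1 (n - 1),
            ((j.factorial : ℚ) * ((2 * m + 2 * j).factorial : ℚ)) /
              (((2 * j).factorial : ℚ) * ((2 * m + j).factorial : ℚ)) ∧
      Matrix.det (Matrix.of fun i j : Fin n =>
          (Nat.choose ((i : ℕ) + (j : ℕ) + m) (2 * (j : ℕ)) : ℚ))
        = Matrix.det (Matrix.of fun i j : Fin m =>
            (catalan (n + (i : ℕ) + (j : ℕ)) : ℚ)) := by
  have h_binomial := det_shiftedChoose m n 0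
  simp only [shiftedChoose, add_zero, binomialFactor_eq_detFactor] at h_binomial
  have h_catalan := det_hankelEntry n m 0
  simp only [add_zero, hankelEntry_zero_left, prod_range_hankelFactor] at h_catalan
  exact ⟨h_binomial.trans (prod_Icc_detFactor m n).symm, h_binomial.trans h_catalan.symm⟩
end

section
/- For all integers n ≥ 0, m ≥ 0 and k ≥ 0, the determinant of the n×n matrix over ℚ with entries binom(i+j+k+m, i-j+m) (equal to binom(i+j+k+m, 2j+k), which vanishes when j > i+m), 0 ≤ i, j ≤ n-1, equals the determinant of the m×m matrix with entries C_{n-i+j}^{(2i+k+1)}, 0 ≤ i, j ≤ m-1. -/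
/-- `genCatalanZ n k` is `C_n^{(k)} = (k/(2n+k))·binom(2n+k, n)` for `n ≥ 0`, and `0` for `n < 0`. -/
def genCatalanZ (n : ℤ) (k : ℕ) : ℚ :=
  if 0 ≤ n then
    ((k : ℚ) / ((2 * n.toNat + k : ℕ) : ℚ)) * (Nat.choose (2 * n.toNat + k) n.toNat : ℚ)
  else 0

/-!
The lower unitriangular kernel `T r c = binom(r + c + k, 2c + k)` has inverse
`U c j = (-1)^(c + j) C_{c-j}^{(2j+k+1)}`: after the shift `d = c - j` this is an alternating
binomial–Catalan sum, which vanishes by a Gosper certificate. Jacobi's complementary minor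
theorem (`T * [[1, U₁₂], [0, U₂₂]] = [[T₁₁, 0], [T₂₁, 1]]` when `T U = 1`), applied to the
`(n + m)`-truncations with the rows of `T` rotated by `m`, equates the left-hand determinant
(rows `m, …, m + n - 1` and columns `0, …, n - 1` of `T`) with `(-1)^(n m)` times the minor of
`U` on rows `n, …, n + m - 1` and columns `0, …, m - 1`. That minor is `(-1)^(n m)` times the
transposed Catalan matrix conjugated by the signs `(-1)^i`.
-/

open Finset Matrix

theorem Nat.add_two_mul_add_one_mul_choose_add_two (M a : ℕ) :
    (a + 2) * (a + 1) * (M + 1).choose (a + 2) = (M + 1) * (M - a) * M.choose a := by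
  have h₁ := Nat.add_one_mul_choose_eq M (a + 1)
  have h₂ := Nat.choose_succ_right_eq M a
  calc (a + 2) * (a + 1) * (M + 1).choose (a + 2)
      = (M + 1).choose (a + 2) * (a + 2) * (a + 1) := by ring
    _ = (M + 1) * (M.choose (a + 1) * (a + 1)) := by rw [← h₁]; ring
    _ = (M + 1) * (M - a) * M.choose a := by rw [h₂]; ring

theorem genCatalanZ_natCast (d K : ℕ) :
    genCatalanZ d K = K / (2 * d + K : ℕ) * (2 * d + K).choose d := by
  simp [genCatalanZ]

theorem genCatalanZ_of_neg {n : ℤ} (hn : n < 0) (K : ℕ) : genCatalanZ n K = 0 :=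
  if_neg hn.not_ge

theorem genCatalanZ_zero_succ (K : ℕ) : genCatalanZ 0 (K + 1) = 1 := by
  rw [← Nat.cast_zero, genCatalanZ_natCast]
  simp [div_self (Nat.cast_add_one_ne_zero K : (K : ℚ) + 1 ≠ 0)]

theorem genCatalanZ_succ (d K : ℕ) :
    ((d : ℚ) + 1) * (d + K + 2) * genCatalanZ (d + 1 : ℕ) (K + 1)
      = (2 * d + K + 2) * (2 * d + K + 1) * genCatalanZ d (K + 1) := by
  have h₁ := Nat.add_one_mul_choose_eq (2 * d + K + 2) d
  have h₂ := Nat.choose_mul_succ_eq (2 * d + K + 1) d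
  rw [show 2 * d + K + 1 + 1 - d = d + K + 2 by omega,
    show 2 * d + K + 1 + 1 = 2 * d + K + 2 by ring] at h₂
  have h₁' : ((2 * d + K + 2 + 1 : ℕ) : ℚ) * ((2 * d + K + 2).choose d)
      = ((2 * d + K + 2 + 1).choose (d + 1)) * (d + 1) := by exact_mod_cast h₁
  have h₂' : (((2 * d + K + 1).choose d) : ℚ) * (2 * d + K + 1 + 1)
      = ((2 * d + K + 2).choose d) * (d + K + 2 : ℕ) := by exact_mod_cast h₂
  rw [genCatalanZ_natCast, genCatalanZ_natCast,
    show 2 * (d + 1) + (K + 1) = 2 * d + K + 2 + 1 by ring,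
    show 2 * d + (K + 1) = 2 * d + K + 1 by ring]
  push_cast at h₁' h₂' ⊢
  field_simp
  linear_combination -((d : ℚ) + K + 2) * h₁' - (2 * (d : ℚ) + K + 3) * h₂'

theorem choose_mul_genCatalanZ_succ {R d : ℕ} (hd : d ≤ R) (K : ℕ) :
    ((d : ℚ) + 1) * (d + K + 2) *
        ((R + (d + 1) + K).choose (2 * (d + 1) + K) * genCatalanZ (d + 1 : ℕ) (K + 1))
      = ((R : ℚ) - d) * (R + d + K + 1) *
        ((R + d + K).choose (2 * d + K) * genCatalanZ d (K + 1)) := by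
  have hchoose := Nat.add_two_mul_add_one_mul_choose_add_two (R + d + K) (2 * d + K)
  rw [show R + d + K - (2 * d + K) = R - d by omega] at hchoose
  have hchoose' : ((2 * d + K : ℚ) + 2) * (2 * d + K + 1) * (R + d + K + 1).choose (2 * d + K + 2)
      = (R + d + K + 1) * (R - d) * (R + d + K).choose (2 * d + K) := by
    exact_mod_cast hchoose
  rw [show R + (d + 1) + K = R + d + K + 1 by ring, show 2 * (d + 1) + K = 2 * d + K + 2 by ring]
  linear_combination ((R + d + K + 1).choose (2 * d + K + 2) : ℚ) * genCatalanZ_succ d K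
    + genCatalanZ d (K + 1) * hchoose'

theorem sum_neg_one_pow_mul_choose_mul_genCatalanZ (R K : ℕ) :
    ∑ d ∈ range (R + 1),
        (-1 : ℚ) ^ d * ((R + d + K).choose (2 * d + K) * genCatalanZ d (K + 1))
      = if R = 0 then 1 else 0 := by
  set F : ℕ → ℚ := fun d ↦ (R + d + K).choose (2 * d + K) * genCatalanZ d (K + 1)
  split_ifs with hR
  · subst hR
    simp [genCatalanZ_zero_succ]
  -- Gosper's certificate: `R (R + K + 1) (-1)^d F d` telescopes to `H (d + 1) - H d`.
  set H : ℕ → ℚ := fun d ↦ -((d : ℚ) * (d + K + 1)) * ((-1) ^ d * F d)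
  have htele : ∀ d ∈ range (R + 1),
      (R : ℚ) * (R + K + 1) * ((-1) ^ d * F d) = H (d + 1) - H d := by
    intro d hd
    have hstep := choose_mul_genCatalanZ_succ (Nat.lt_succ_iff.mp (mem_range.mp hd)) K
    simp only [H, F, pow_succ, Nat.cast_add_one] at hstep ⊢
    linear_combination -(-1 : ℚ) ^ d * hstep
  have hH₀ : H 0 = 0 := by simp [H]
  have hH : H (R + 1) = 0 := by
    simp only [H, F]
    rw [Nat.choose_eq_zero_of_lt (by omega)]
    simp
  have hsum := Finset.sum_congr rfl htele
  rw [Finset.sum_range_sub, hH, hH₀, sub_zero, ← Finset.mul_sum] at hsum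
  exact (mul_eq_zero.mp hsum).resolve_left (by positivity)

def binomKernel (k r c : ℕ) : ℚ := (r + c + k).choose (2 * c + k)

def catalanKernel (k c j : ℕ) : ℚ :=
  (-1) ^ (c + j) * genCatalanZ ((c : ℤ) - j) (2 * j + k + 1)

theorem binomKernel_mul_catalanKernel (k j R d : ℕ) :
    binomKernel k (j + R) (j + d) * catalanKernel k (j + d) j
      = (-1) ^ d * ((R + d + (2 * j + k)).choose (2 * d + (2 * j + k)) *
          genCatalanZ d (2 * j + k + 1)) := by
  have hsign : (-1 : ℚ) ^ (j + d + j) = (-1) ^ d := by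
    rw [show j + d + j = d + 2 * j by ring, pow_add, pow_mul, neg_one_sq, one_pow, mul_one]
  rw [binomKernel, catalanKernel, hsign, show ((j + d : ℕ) : ℤ) - j = d by push_cast; ring,
    show j + R + (j + d) + k = R + d + (2 * j + k) by ring,
    show 2 * (j + d) + k = 2 * d + (2 * j + k) by ring]
  ring

theorem sum_binomKernel_mul_catalanKernel (k : ℕ) {N r : ℕ} (hr : r < N) (j : ℕ) :
    ∑ c ∈ range N, binomKernel k r c * catalanKernel k c j = if r = j then 1 else 0 := by
  have hvanish : ∀ c ∈ range N, c ∉ Ico j (r + 1) →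
      binomKernel k r c * catalanKernel k c j = 0 := by
    intro c _ hc
    rcases lt_or_ge c j with hcj | hjc
    · rw [catalanKernel, genCatalanZ_of_neg (by omega), mul_zero, mul_zero]
    · rw [binomKernel, Nat.choose_eq_zero_of_lt (by rw [mem_Ico] at hc; omega), Nat.cast_zero,
        zero_mul]
  rw [← sum_subset (fun c hc ↦ by rw [mem_Ico] at hc; rw [mem_range]; omega) hvanish,
    sum_Ico_eq_sum_range]
  rcases le_or_gt j r with hjr | hrj
  · obtain ⟨R, rfl⟩ := Nat.exists_eq_add_of_le hjr
    simp only [binomKernel_mul_catalanKernel, show j + R + 1 - j = R + 1 by omega,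
      sum_neg_one_pow_mul_choose_mul_genCatalanZ, Nat.add_eq_left]
  · rw [Nat.sub_eq_zero_of_le hrj, sum_range_zero, if_neg hrj.ne]

theorem Matrix.det_toBlocks₁₁_of_mul_eq_one {m n R : Type*} [Fintype m] [Fintype n]
    [DecidableEq m] [DecidableEq n] [CommRing R] {T U : Matrix (m ⊕ n) (m ⊕ n) R}
    (h : T * U = 1) : T.toBlocks₁₁.det = T.det * U.toBlocks₂₂.det := by
  rw [← fromBlocks_toBlocks T, ← fromBlocks_toBlocks U, fromBlocks_multiply, ← fromBlocks_one,
    fromBlocks_inj] at h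
  have hprod : T * fromBlocks 1 U.toBlocks₁₂ 0 U.toBlocks₂₂
      = fromBlocks T.toBlocks₁₁ 0 T.toBlocks₂₁ 1 := by
    rw [← fromBlocks_toBlocks T, fromBlocks_multiply, h.2.1, h.2.2.2]
    simp
  have hdet := congrArg det hprod
  rwa [det_mul, det_fromBlocks_zero₂₁, det_fromBlocks_zero₁₂, det_one, det_one, one_mul,
    mul_one, eq_comm] at hdet

theorem coe_finRotate_pow_apply {N : ℕ} (p : ℕ) (v : Fin N) :
    ((finRotate N ^ p) v : ℕ) = (v + p) % N := by
  induction p generalizing v with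
  | zero => simp [Nat.mod_eq_of_lt v.isLt]
  | succ p ih =>
    have := v.neZero
    rw [pow_succ, Equiv.Perm.mul_apply, ih, finRotate_apply, Fin.val_add, Fin.val_one',
      Nat.mod_add_mod, Nat.add_right_comm, Nat.add_mod_mod, Nat.add_assoc]

theorem sign_finRotate_pow (n m : ℕ) :
    Equiv.Perm.sign (finRotate (n + m) ^ m) = (-1) ^ (n * m) := by
  rw [map_pow, sign_finRotate, ← pow_mul]
  cases m with
  | zero => simp
  | succ m =>
    rw [show (n + (m + 1) - 1) * (m + 1) = n * (m + 1) + m * (m + 1) by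
      rw [show n + (m + 1) - 1 = n + m by omega]; ring, pow_add,
      (Nat.even_mul_succ_self m).neg_one_pow, mul_one]

theorem Matrix.det_minor_eq_of_sum_mul_eq_ite {R : Type*} [CommRing R] {n m : ℕ}
    (t u : ℕ → ℕ → R)
    (h : ∀ r < n + m, ∀ j < n + m,
      ∑ c ∈ range (n + m), t r c * u c j = if r = j then 1 else 0) :
    det (of fun i j : Fin n => t (i + m) j)
      = (-1) ^ (n * m) * det (of fun a b : Fin (n + m) => t a b)
          * det (of fun i j : Fin m => u (i + n) j) := by
  set T : Matrix (Fin (n + m)) (Fin (n + m)) R := of fun a b => t a b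
  set U : Matrix (Fin (n + m)) (Fin (n + m)) R := of fun a b => u a b
  have hTU : T * U = 1 := by
    ext a b
    simpa [T, U, mul_apply, one_apply, ← Fin.val_inj] using
      (Fin.sum_univ_eq_sum_range (fun c ↦ t a c * u c b) _).trans (h a a.isLt b b.isLt)
  -- Rotating by `m` moves rows `m, …, m + n - 1` of `T` to the top.
  set σ := finRotate (n + m) ^ m
  set e : Fin n ⊕ Fin m ≃ Fin (n + m) := finSumFinEquiv
  have hblock := det_toBlocks₁₁_of_mul_eq_one (T := T.submatrix (e.trans σ) e)
    (U := U.submatrix e (e.trans σ)) (by rw [submatrix_mul_equiv, hTU, submatrix_one_equiv])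
  have hA : (T.submatrix (e.trans σ) e).toBlocks₁₁ = of fun i j : Fin n => t (i + m) j := by
    ext i j
    have hi : (σ (Fin.castAdd m i) : ℕ) = i + m := by
      rw [coe_finRotate_pow_apply, Fin.val_castAdd, Nat.mod_eq_of_lt (by omega)]
    simp [T, toBlocks₁₁, e, hi]
  have hZ : (U.submatrix e (e.trans σ)).toBlocks₂₂ = of fun i j : Fin m => u (i + n) j := by
    ext i j
    have hj : (σ (Fin.natAdd n j) : ℕ) = j := by
      rw [coe_finRotate_pow_apply, Fin.val_natAdd, show n + (j : ℕ) + m = j + (n + m) by ring,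
        Nat.add_mod_right, Nat.mod_eq_of_lt (by omega)]
    simp [U, toBlocks₂₂, e, hj, add_comm]
  have hT : (T.submatrix (e.trans σ) e).det = (-1) ^ (n * m) * T.det := by
    rw [show T.submatrix (e.trans σ) e = (T.submatrix σ id).submatrix e e from rfl,
      det_submatrix_equiv_self, det_permute, sign_finRotate_pow]
    push_cast
    rfl
  rwa [hA, hZ, hT] at hblock

theorem Matrix.det_of_neg_one_pow_add_mul {ι R : Type*} [Fintype ι] [DecidableEq ι] [CommRing R]
    (s : ι → ℕ) (M : Matrix ι ι R) :
    det (of fun i j => (-1) ^ (s i + s j) * M i j) = det M := by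
  have hconj : (of fun i j => (-1) ^ (s i + s j) * M i j)
      = diagonal (fun i ↦ (-1) ^ s i) * M * diagonal (fun i ↦ (-1) ^ s i) := by
    ext i j
    simp only [of_apply, diagonal_mul, mul_diagonal, pow_add]
    ring
  rw [hconj, det_mul, det_mul, det_diagonal, mul_right_comm, ← prod_mul_distrib]
  simp [← pow_add, ← two_mul, pow_mul]

theorem det_binomKernel (k N : ℕ) : det (of fun a b : Fin N => binomKernel k a b) = 1 := by
  rw [det_of_isLowerTriangular]
  · simp [binomKernel, ← two_mul]
  · intro a b hab
    simp only [of_apply, binomKernel]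
    rw [Nat.choose_eq_zero_of_lt (by have : (a : ℕ) < b := hab; omega), Nat.cast_zero]

theorem stmt_13 (n m k : ℕ) :
    Matrix.det (Matrix.of fun i j : Fin n =>
        (Nat.choose ((i : ℕ) + (j : ℕ) + k + m) (2 * (j : ℕ) + k) : ℚ))
      = Matrix.det (Matrix.of fun i j : Fin m =>
          genCatalanZ ((n : ℤ) - (i : ℕ) + (j : ℕ)) (2 * (i : ℕ) + k + 1)) := by
  have hbinom : (of fun i j : Fin n => ((i + j + k + m : ℕ).choose (2 * j + k) : ℚ))
      = of fun i j : Fin n => binomKernel k (i + m) j := by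
    ext i j
    rw [of_apply, of_apply, binomKernel, show (i : ℕ) + j + k + m = i + m + j + k by ring]
  have hcatalan : (of fun i j : Fin m => catalanKernel k (i + n) j)
      = (-1 : ℚ) ^ n • of fun i j : Fin m => (-1) ^ ((i : ℕ) + j) *
          (of fun i j : Fin m =>
            genCatalanZ ((n : ℤ) - (i : ℕ) + (j : ℕ)) (2 * (i : ℕ) + k + 1))ᵀ i j := by
    ext i j
    simp only [catalanKernel, Matrix.smul_apply, of_apply, transpose_apply, smul_eq_mul]
    push_cast
    ring_nf
  rw [hbinom, det_minor_eq_of_sum_mul_eq_ite (binomKernel k) (catalanKernel k)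
      (fun _ hr j _ ↦ sum_binomKernel_mul_catalanKernel k hr j),
    det_binomKernel, hcatalan, det_smul, det_of_neg_one_pow_add_mul, det_transpose,
    Fintype.card_fin, mul_one, ← mul_assoc, ← pow_mul, ← pow_add, ← two_mul, pow_mul,
    neg_one_sq, one_pow, one_mul]
end

section
/- For all integers n ≥ 0 and m ≥ 0, det( ( binom(i+m, j)·binom(i+m+j, j) / binom(2i+2m, i+m) )_{i,j=0}^{n-1} ) · det( ( 1/(i+j+1) )_{i,j=0}^{m-1} ) = det( ( 1/(n+i+j+1) )_{i,j=0}^{m-1} ), where all determinants are over ℚ. -/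
/-!
Both Hilbert determinants are Cauchy determinants `det (1 / (x i + y j))` with `x i = n + i` and
`y j = j + 1`. They share the numerator `∏_{i<j} (j - i)^2`, so their quotient is the inverse
quotient of the denominators `∏_{i,j<m} (n + i + j + 1)`, and raising `n` by one divides that
denominator by `(n+m)!^2 / (n! (n+2m)!)`.

On the other side, `j!^2 binom(a, j) binom(a+j, j) = ∏_{r<j} (a(a+1) - r(r+1))` is a monic
polynomial of degree `j` in `a(a+1)`. So, up to rescaling rows and columns, the binomial matrix
evaluates monic polynomials of degrees `0, …, n-1` at the nodes `(i+m)(i+m+1)`; its determinant is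
therefore a Vandermonde determinant, which works out to the product of the same ratios
`(k+m)!^2 / (k! (k+2m)!)` over `k < n`.
-/

open Finset Matrix Nat Polynomial

theorem Fin.prod_Ioi_eq_prod_range {M : Type*} [CommMonoid M] {n : ℕ} (f : ℕ → ℕ → M) :
    ∏ i : Fin n, ∏ j ∈ Ioi i, f i j = ∏ j ∈ range n, ∏ i ∈ range j, f i j := by
  rw [prod_comm' (t' := univ) (s' := fun j => Iio j) (by simp),
    ← Fin.prod_univ_eq_prod_range (fun j => ∏ i ∈ range j, f i j)]
  refine prod_congr rfl fun j _ => ?_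
  rw [← Nat.Iio_eq_range, ← Fin.map_valEmbedding_Iio, prod_map]
  rfl

namespace Matrix

variable {K : Type*} [Field K]

/-- Subtracting multiples of row `0` clears column `0`; the remaining Schur complement is a
Cauchy matrix with rescaled rows and columns. -/
theorem det_cauchy_succ {m : ℕ} (x y : Fin (m + 1) → K) (h : ∀ i j, x i + y j ≠ 0) :
    (of fun i j => 1 / (x i + y j)).det =
      1 / (x 0 + y 0) * ((∏ i : Fin m, (x i.succ - x 0) / (x i.succ + y 0)) *
        ((∏ j : Fin m, (y j.succ - y 0) / (x 0 + y j.succ)) *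
          (of fun i j : Fin m => 1 / (x i.succ + y j.succ)).det)) := by
  set B : Matrix (Fin (m + 1)) (Fin (m + 1)) K := of fun i j =>
    Fin.cases (1 / (x 0 + y j)) (fun i => (x i.succ - x 0) / (x i.succ + y 0) *
      ((y j - y 0) / (x 0 + y j) * (1 / (x i.succ + y j)))) i with hB
  clear_value B
  have hrow : (of fun i j => 1 / (x i + y j)).det = B.det := by
    refine det_eq_of_forall_row_eq_smul_add_const
      (Fin.cases 0 fun i => (x 0 + y 0) / (x i.succ + y 0)) 0 rfl fun i j => ?_
    cases i using Fin.cases with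
    | zero => simp [hB]
    | succ i =>
      have hij := h i.succ j
      have h0j := h 0 j
      have hi0 := h i.succ 0
      simp only [hB, of_apply, Fin.cases_succ, Fin.cases_zero]
      field_simp
      ring
  have hsub : B.submatrix Fin.succ Fin.succ = of fun i j =>
      (x i.succ - x 0) / (x i.succ + y 0) * (of fun i j =>
        (y j.succ - y 0) / (x 0 + y j.succ) * (1 / (x i.succ + y j.succ))) i j := by
    ext i j
    simp [hB]
  rw [hrow, det_succ_column_zero, Fin.sum_univ_succ, sum_eq_zero, add_zero,
    Fin.succAbove_zero, hsub, det_mul_column]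
  · simp only [hB, of_apply, Fin.cases_zero, Fin.val_zero, pow_zero, one_mul]
    exact congrArg _ (congrArg _ (det_mul_row _ (of fun i j : Fin m => 1 / (x i.succ + y j.succ))))
  · intro i _
    simp [hB]

theorem det_cauchy {m : ℕ} (x y : Fin m → K) (h : ∀ i j, x i + y j ≠ 0) :
    (of fun i j => 1 / (x i + y j)).det =
      (∏ i, ∏ j ∈ Ioi i, (x j - x i) * (y j - y i)) / ∏ i, ∏ j, (x i + y j) := by
  induction m with
  | zero => simp
  | succ m ih =>
    rw [det_cauchy_succ x y h, ih _ _ fun i j => h _ _]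
    simp only [Fin.prod_univ_succ, Fin.prod_Ioi_zero, Fin.prod_Ioi_succ, prod_div_distrib,
      prod_mul_distrib]
    have h00 := h 0 0
    have hx : ∏ i : Fin m, (x i.succ + y 0) ≠ 0 := prod_ne_zero_iff.mpr fun i _ => h _ _
    have hy : ∏ j : Fin m, (x 0 + y j.succ) ≠ 0 := prod_ne_zero_iff.mpr fun j _ => h _ _
    have hxy : ∏ i : Fin m, ∏ j : Fin m, (x i.succ + y j.succ) ≠ 0 :=
      prod_ne_zero_iff.mpr fun i _ => prod_ne_zero_iff.mpr fun j _ => h _ _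
    field_simp

theorem det_shiftedHilbert [CharZero K] (n m : ℕ) :
    (of fun i j : Fin m => 1 / ((n + i + j + 1 : ℕ) : K)).det =
      (∏ i : Fin m, ∏ j ∈ Ioi i, ((j : K) - i) ^ 2) /
        ∏ i ∈ range m, ∏ j ∈ range m, ((n + i + j + 1 : ℕ) : K) := by
  have h := det_cauchy (fun i : Fin m => (n + i : K)) (fun j => (j + 1 : K))
    fun i j => by exact_mod_cast Nat.succ_ne_zero (n + i + j)
  push_cast
  simp only [← add_assoc, add_sub_add_left_eq_sub, add_sub_add_right_eq_sub, ← sq] at h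
  rw [h, Fin.prod_univ_eq_prod_range (fun i => ∏ j : Fin m, ((n : K) + i + j + 1))]
  exact congrArg _ (prod_congr rfl fun i _ =>
    Fin.prod_univ_eq_prod_range (fun j => (n : K) + i + j + 1) m)

end Matrix

theorem factorial_mul_prod_range_add_add_one (n k : ℕ) :
    n ! * ∏ i ∈ range k, (n + i + 1) = (n + k)! := by
  rw [← factorial_mul_ascFactorial, ascFactorial_eq_prod_range]
  simp only [add_right_comm]

theorem prod_range_prod_range_add_add_one_mul_factorial (n m : ℕ) :
    (∏ i ∈ range m, ∏ j ∈ range m, (n + i + j + 1)) * (n ! * (n + 2 * m)!) =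
      (∏ i ∈ range m, ∏ j ∈ range m, (n + 1 + i + j + 1)) * (n + m)! ^ 2 := by
  have hrow : ∀ i, (∏ j ∈ range m, (n + i + j + 1)) * (n + m + i + 1) =
      (∏ j ∈ range m, (n + 1 + i + j + 1)) * (n + i + 1) := by
    intro i
    rw [add_right_comm n m, ← prod_range_succ (fun j => n + i + j + 1), prod_range_succ']
    exact congrArg (· * _) (prod_congr rfl fun j _ => by ring)
  have hA := factorial_mul_prod_range_add_add_one (n + m) m
  have hB := factorial_mul_prod_range_add_add_one n m
  rw [add_assoc n m m, ← two_mul] at hA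
  calc (∏ i ∈ range m, ∏ j ∈ range m, (n + i + j + 1)) * (n ! * (n + 2 * m)!)
      = n ! * (n + m)! *
          ∏ i ∈ range m, ((∏ j ∈ range m, (n + i + j + 1)) * (n + m + i + 1)) := by
        rw [← hA, prod_mul_distrib]; ring
    _ = (n ! * ∏ i ∈ range m, (n + i + 1)) * (n + m)! *
          ∏ i ∈ range m, ∏ j ∈ range m, (n + 1 + i + j + 1) := by
        rw [prod_congr rfl fun i _ => hrow i, prod_mul_distrib]; ring
    _ = _ := by rw [hB]; ring

theorem prod_range_natCast_sub_eq_descFactorial (R : Type*) [CommRing R] (a j : ℕ) :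
    ∏ r ∈ range j, ((a : R) - r) = a.descFactorial j := by
  rw [← descPochhammer_eval_eq_descFactorial, descPochhammer_eval_eq_prod_range]

theorem sq_factorial_mul_choose_mul_choose_add {R : Type*} [CommRing R] (a j : ℕ) :
    (j ! : R) ^ 2 * (a.choose j * (a + j).choose j) =
      ∏ r ∈ range j, ((a : R) * (a + 1) - r * (r + 1)) := by
  have hdesc := prod_range_natCast_sub_eq_descFactorial R a j
  have hasc : ∏ r ∈ range j, ((a : R) + 1 + r) = ((a + 1).ascFactorial j : R) := by
    rw [ascFactorial_eq_prod_range]; push_cast; rfl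
  rw [descFactorial_eq_factorial_mul_choose] at hdesc
  rw [ascFactorial_eq_factorial_mul_choose] at hasc
  push_cast at hdesc hasc
  calc _ = (j ! * a.choose j : R) * (j ! * (a + j).choose j) := by ring
    _ = _ := by
      rw [← hdesc, ← hasc, ← prod_mul_distrib]
      exact prod_congr rfl fun r _ => by ring

section CharZero

variable {K : Type*} [Field K] [CharZero K]

theorem prod_range_prod_range_add_add_one_eq_mul_prod (n m : ℕ) :
    ∏ i ∈ range m, ∏ j ∈ range m, ((i + j + 1 : ℕ) : K) =
      (∏ i ∈ range m, ∏ j ∈ range m, ((n + i + j + 1 : ℕ) : K)) *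
        ∏ k ∈ range n, ((k + m)! : K) ^ 2 / (k ! * (k + 2 * m)!) := by
  induction n with
  | zero => simp
  | succ n ih =>
    have h := congrArg (Nat.cast : ℕ → K) (prod_range_prod_range_add_add_one_mul_factorial n m)
    push_cast at h ih ⊢
    have hfac : (n ! : K) * (n + 2 * m)! ≠ 0 :=
      mul_ne_zero (cast_ne_zero.mpr n.factorial_ne_zero) (cast_ne_zero.mpr (factorial_ne_zero _))
    rw [← eq_div_iff hfac, mul_div_assoc] at h
    rw [ih, prod_range_succ, h]
    ring

theorem choose_mul_choose_add_div_choose_two_mul (a j : ℕ) :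
    (a.choose j : K) * (a + j).choose j / (2 * a).choose a =
      (a ! : K) ^ 2 / (2 * a)! *
        (1 / (j ! : K) ^ 2 * ∏ r ∈ range j, ((a : K) * (a + 1) - r * (r + 1))) := by
  rw [← sq_factorial_mul_choose_mul_choose_add, cast_choose K (by omega : a ≤ 2 * a),
    show 2 * a - a = a by omega]
  have : (j ! : K) ≠ 0 := cast_ne_zero.mpr j.factorial_ne_zero
  field_simp

theorem sq_factorial_div_mul_prod_range (k m : ℕ) :
    ((k + m)! : K) ^ 2 / (2 * k + 2 * m)! *
        (1 / (k ! : K) ^ 2 * ∏ i ∈ range k, (((k : K) - i) * (i + k + 2 * m + 1))) =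
      ((k + m)! : K) ^ 2 / (k ! * (k + 2 * m)!) := by
  have hsub : ∏ i ∈ range k, ((k : K) - i) = k ! := by
    rw [prod_range_natCast_sub_eq_descFactorial, descFactorial_self]
  have hadd : ∏ i ∈ range k, ((i : K) + k + 2 * m + 1) = (2 * k + 2 * m)! / (k + 2 * m)! := by
    rw [eq_div_iff (cast_ne_zero.mpr (factorial_ne_zero _)), mul_comm,
      show 2 * k + 2 * m = k + 2 * m + k by ring,
      ← factorial_mul_prod_range_add_add_one (k + 2 * m) k]
    push_cast
    exact congrArg _ (prod_congr rfl fun i _ => by ring)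
  have : ((2 * k + 2 * m)! : K) ≠ 0 := cast_ne_zero.mpr (factorial_ne_zero _)
  have : (k ! : K) ≠ 0 := cast_ne_zero.mpr k.factorial_ne_zero
  have : ((k + 2 * m)! : K) ≠ 0 := cast_ne_zero.mpr (factorial_ne_zero _)
  rw [prod_mul_distrib, hsub, hadd]
  field_simp

theorem det_choose_mul_choose_div_choose (n m : ℕ) :
    (of fun i j : Fin n =>
        ((Nat.choose ((i : ℕ) + m) (j : ℕ) : K) *
            (Nat.choose ((i : ℕ) + m + (j : ℕ)) (j : ℕ) : K)) /
          (Nat.choose (2 * (i : ℕ) + 2 * m) ((i : ℕ) + m) : K)).det =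
      ∏ k ∈ range n, ((k + m)! : K) ^ 2 / (k ! * (k + 2 * m)!) := by
  set t : Fin n → K := fun i => ((i : ℕ) + m : K) * ((i : ℕ) + m + 1)
  set q : Fin n → K[X] := fun j => ∏ r ∈ range j, (X - C ((r : K) * (r + 1)))
  have hentry : (of fun i j : Fin n =>
        ((Nat.choose ((i : ℕ) + m) (j : ℕ) : K) *
            (Nat.choose ((i : ℕ) + m + (j : ℕ)) (j : ℕ) : K)) /
          (Nat.choose (2 * (i : ℕ) + 2 * m) ((i : ℕ) + m) : K)) =
      of fun i j : Fin n => ((i + m : ℕ)! : K) ^ 2 / (2 * i + 2 * m)! *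
        (of fun i j : Fin n => 1 / ((j : ℕ) ! : K) ^ 2 *
          (of fun i j : Fin n => (q j).eval (t i)) i j) i j := by
    ext i j
    simp only [of_apply]
    rw [show 2 * (i : ℕ) + 2 * m = 2 * (i + m) by ring, choose_mul_choose_add_div_choose_two_mul]
    simp [q, t, eval_prod]
  have hvand : (of fun i j => (q j).eval (t i)).det = ∏ i, ∏ j ∈ Ioi i, (t j - t i) := by
    rw [← det_eval_matrixOfPolynomials_eq_det_vandermonde t q, det_vandermonde]
    · intro j
      rw [natDegree_prod_of_monic _ _ fun r _ => monic_X_sub_C _]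
      simp only [natDegree_X_sub_C, sum_const, card_range, smul_eq_mul, mul_one]
    · exact fun j => monic_prod_of_monic _ _ fun r _ => monic_X_sub_C _
  rw [hentry, det_mul_column, det_mul_row, hvand]
  rw [prod_congr rfl fun i _ => prod_congr rfl fun j _ =>
    (show t j - t i = (((j : ℕ) : K) - (i : ℕ)) * ((i : ℕ) + (j : ℕ) + 2 * m + 1) by
      simp only [t]; ring)]
  rw [Fin.prod_Ioi_eq_prod_range (fun i j => ((j : K) - i) * (i + j + 2 * m + 1)),
    Fin.prod_univ_eq_prod_range (fun i => ((i + m)! : K) ^ 2 / (2 * i + 2 * m)!),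
    Fin.prod_univ_eq_prod_range (fun j => 1 / (j ! : K) ^ 2), ← prod_mul_distrib,
    ← prod_mul_distrib]
  exact prod_congr rfl fun k _ => sq_factorial_div_mul_prod_range k m

end CharZero

theorem stmt_14 (n m : ℕ) :
    Matrix.det (Matrix.of fun i j : Fin n =>
        ((Nat.choose ((i : ℕ) + m) (j : ℕ) : ℚ) *
            (Nat.choose ((i : ℕ) + m + (j : ℕ)) (j : ℕ) : ℚ)) /
          (Nat.choose (2 * (i : ℕ) + 2 * m) ((i : ℕ) + m) : ℚ)) *
      Matrix.det (Matrix.of fun i j : Fin m =>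
        (1 : ℚ) / (((i : ℕ) + (j : ℕ) + 1 : ℕ) : ℚ))
      = Matrix.det (Matrix.of fun i j : Fin m =>
          (1 : ℚ) / ((n + (i : ℕ) + (j : ℕ) + 1 : ℕ) : ℚ)) := by
  have hilbert : (of fun i j : Fin m => (1 : ℚ) / (((i : ℕ) + (j : ℕ) + 1 : ℕ) : ℚ)).det =
      (∏ i : Fin m, ∏ j ∈ Ioi i, ((j : ℚ) - i) ^ 2) /
        ∏ i ∈ range m, ∏ j ∈ range m, ((i + j + 1 : ℕ) : ℚ) := by
    simpa using det_shiftedHilbert (K := ℚ) 0 m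
  have hratio : ∏ k ∈ range n, ((k + m)! : ℚ) ^ 2 / (k ! * (k + 2 * m)!) ≠ 0 :=
    prod_ne_zero_iff.mpr fun k _ => by positivity
  rw [det_choose_mul_choose_div_choose, hilbert, det_shiftedHilbert,
    prod_range_prod_range_add_add_one_eq_mul_prod n m, mul_comm (∏ i ∈ range m, _),
    ← mul_div_assoc, mul_div_mul_left _ _ hratio]
end

section
/- For all integers n ≥ 0 and k ≥ 1, the determinant of the n×n matrix over ℚ(q) with entries q^{(i-j)(i-j-1)/2} · [i+j+k choose i-j+1] for 0 ≤ j ≤ i+1 and 0 for j > i+1, 0 ≤ i, j ≤ n-1, equals C_n^{(k)}(q) = ([k]/[2n+k])·[2n+k choose n]. -/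
/-!
The matrix is lower Hessenberg with constant superdiagonal `q`. For such a matrix `A`, if
`d 0 = 1` and `d (i + 1) = ∑_{l ≤ i} (-q)^(i-l) A i l d l`, then multiplying `A` on the right by the
upper triangular matrix `V l j = (-q)^(j-l) d l` makes it lower triangular with diagonal entries
`d (i + 1)`, so `det A = d n` as soon as no `d i` vanishes.

It remains to check this recursion for `d l = C_l^{(k)}(q)`. Writing `k = c + 1` and
`C_{l+1}^{(c+1)}(q) = [2l+c+2 choose l+1] - q^(c+1) [2l+c+2 choose l]` reduces it to the identity
`∑_{l+j=m} (-1)^j q^(j choose 2) [2l+c choose l] [m+l+c choose j] = q^(m(m+c))`, proved by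
induction on `m` for all `c` at once, together with its companion with `q^(j+1 choose 2)` in
place of `q^(j choose 2)`, which sums to `1`: expanding two auxiliary sums by the two `q`-Pascal
rules gives two linear relations that determine both sums at level `m + 1`.
-/

/-- The indeterminate `q` in the field `ℚ(q)` of rational functions. -/
noncomputable def qq : RatFunc ℚ := RatFunc.X

/-- The `q`-integer `[n] = 1 + q + ⋯ + q^{n-1}`. -/
noncomputable def qInt (n : ℕ) : RatFunc ℚ := ∑ i ∈ Finset.range n, qq ^ i

/-- The `q`-factorial `[n]! = [1][2]⋯[n]`. -/
noncomputable def qFact (n : ℕ) : RatFunc ℚ := ∏ i ∈ Finset.range n, qInt (i + 1)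

/-- The Gaussian `q`-binomial coefficient `[a choose b] = [a]!/([b]![a-b]!)` for `b ≤ a`,
and `0` for `b > a`. -/
noncomputable def qChoose (a b : ℕ) : RatFunc ℚ :=
  if b ≤ a then qFact a / (qFact b * qFact (a - b)) else 0

open Finset

lemma Nat.succ_choose_two (t : ℕ) : (t + 1).choose 2 = t.choose 2 + t := by
  rw [Nat.choose_succ_succ', Nat.choose_one_right, add_comm]

section Hessenberg

variable {R : Type*} [CommRing R]

lemma sum_range_succ_mul_neg_pow (b : R) (f : ℕ → R) (j : ℕ) :
    ∑ l ∈ range (j + 2), (-b) ^ (j + 1 - l) * f l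
      = -b * ∑ l ∈ range (j + 1), (-b) ^ (j - l) * f l + f (j + 1) := by
  rw [sum_range_succ, Nat.sub_self, pow_zero, one_mul, mul_sum]
  congr 1
  refine sum_congr rfl fun l hl => ?_
  rw [show j + 1 - l = j - l + 1 by have := mem_range.1 hl; omega, pow_succ]
  ring

lemma sum_neg_pow_mul_eq_zero_of_lt {A : ℕ → ℕ → R} {b : R} {d : ℕ → R}
    (hA : ∀ i j, i + 1 < j → A i j = 0) (hsup : ∀ i, A i (i + 1) = b)
    (hd : ∀ i, ∑ l ∈ range (i + 1), (-b) ^ (i - l) * (A i l * d l) = d (i + 1))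
    {i j : ℕ} (hij : i < j) :
    ∑ l ∈ range (j + 1), (-b) ^ (j - l) * (A i l * d l) = 0 := by
  induction j, hij using Nat.le_induction with
  | base => rw [sum_range_succ_mul_neg_pow, hd, hsup]; ring
  | succ j hij ih => rw [sum_range_succ_mul_neg_pow, ih, hA i (j + 1) (by omega)]; ring

theorem det_of_hessenberg [IsDomain R] {A : ℕ → ℕ → R} {b : R} {d : ℕ → R}
    (hA : ∀ i j, i + 1 < j → A i j = 0) (hsup : ∀ i, A i (i + 1) = b)
    (hd : ∀ i, ∑ l ∈ range (i + 1), (-b) ^ (i - l) * (A i l * d l) = d (i + 1))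
    (n : ℕ) (hne : ∀ i < n, d i ≠ 0) :
    d 0 * (Matrix.of fun i j : Fin n => A i j).det = d n := by
  set M : Matrix (Fin n) (Fin n) R := Matrix.of fun i j => A i j
  set V : Matrix (Fin n) (Fin n) R :=
    Matrix.of fun l j => if (l : ℕ) ≤ j then (-b) ^ ((j : ℕ) - l) * d l else 0
  have hV : V.IsUpperTriangular := fun l j hjl => if_neg (not_le.2 hjl)
  have hMV (i j : Fin n) :
      (M * V) i j = ∑ l ∈ range (j + 1), (-b) ^ ((j : ℕ) - l) * (A i l * d l) := by
    simp only [M, V, Matrix.mul_apply, Matrix.of_apply, mul_ite, mul_zero]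
    rw [Fin.sum_univ_eq_sum_range
      (fun l => if l ≤ j then A i l * ((-b) ^ ((j : ℕ) - l) * d l) else 0), ← sum_filter]
    refine sum_congr (ext fun l => ?_) fun l _ => mul_left_comm _ _ _
    simp only [mem_filter, mem_range]
    omega
  have hMV_tri : (M * V).IsLowerTriangular :=
    fun i j hij => (hMV i j).trans (sum_neg_pow_mul_eq_zero_of_lt hA hsup hd hij)
  have hdet := Matrix.det_mul M V
  rw [Matrix.det_of_isLowerTriangular _ hMV_tri, Matrix.det_of_isUpperTriangular hV] at hdet
  have hVdiag (i : Fin n) : V i i = d i := by simp [V]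
  simp only [hMV, hd, hVdiag] at hdet
  rw [Fin.prod_univ_eq_prod_range (fun i => d (i + 1)),
    Fin.prod_univ_eq_prod_range d] at hdet
  have hprod : ∏ i ∈ range n, d i ≠ 0 := prod_ne_zero_iff.2 fun i hi => hne i (mem_range.1 hi)
  have htel : (∏ i ∈ range n, d (i + 1)) * d 0 = (∏ i ∈ range n, d i) * d n := by
    rw [← prod_range_succ', prod_range_succ]
  refine mul_right_cancel₀ hprod ?_
  linear_combination htel - d 0 * hdet

end Hessenberg

lemma qq_pow_ne_one {n : ℕ} (hn : n ≠ 0) : qq ^ n ≠ 1 := by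
  intro h
  have hX : (Polynomial.X : Polynomial ℚ) ^ n = 1 :=
    RatFunc.algebraMap_injective ℚ (by simpa [qq, RatFunc.algebraMap_X] using h)
  simpa [hn] using congrArg Polynomial.natDegree hX

lemma qInt_ne_zero {n : ℕ} (hn : n ≠ 0) : qInt n ≠ 0 := by
  intro h
  have hgeom : qInt n * (qq - 1) = qq ^ n - 1 := geom_sum_mul qq n
  rw [h, zero_mul, eq_comm, sub_eq_zero] at hgeom
  exact qq_pow_ne_one hn hgeom

lemma qInt_add (a b : ℕ) : qInt (a + b) = qInt a + qq ^ a * qInt b := by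
  simp only [qInt, sum_range_add, mul_sum, pow_add]

lemma qFact_succ (n : ℕ) : qFact (n + 1) = qFact n * qInt (n + 1) :=
  prod_range_succ _ n

lemma qFact_zero : qFact 0 = 1 := prod_range_zero _

lemma qFact_ne_zero (n : ℕ) : qFact n ≠ 0 :=
  prod_ne_zero_iff.2 fun _ _ => qInt_ne_zero (Nat.succ_ne_zero _)

lemma qChoose_of_le {a b : ℕ} (h : b ≤ a) :
    qChoose a b = qFact a / (qFact b * qFact (a - b)) := if_pos h

lemma qChoose_of_lt {a b : ℕ} (h : a < b) : qChoose a b = 0 := if_neg (by omega)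

lemma qChoose_ne_zero {a b : ℕ} (h : b ≤ a) : qChoose a b ≠ 0 := by
  rw [qChoose_of_le h]
  exact div_ne_zero (qFact_ne_zero a) (mul_ne_zero (qFact_ne_zero b) (qFact_ne_zero _))

@[simp]
lemma qChoose_zero_right (a : ℕ) : qChoose a 0 = 1 := by
  rw [qChoose_of_le a.zero_le, Nat.sub_zero, qFact_zero, one_mul,
    div_self (qFact_ne_zero a)]

lemma qChoose_succ_mul_qInt {n j : ℕ} (h : j ≤ n) :
    qChoose n (j + 1) * qInt (n + 1) = qChoose (n + 1) (j + 1) * qInt (n - j) := by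
  rcases h.eq_or_lt with rfl | hlt
  · simp [qChoose_of_lt (Nat.lt_succ_self j), qInt]
  obtain ⟨t, rfl⟩ : ∃ t, n = j + 1 + t := ⟨n - (j + 1), by omega⟩
  rw [qChoose_of_le (by omega), qChoose_of_le (by omega),
    show j + 1 + t + 1 - (j + 1) = t + 1 by omega, show j + 1 + t - (j + 1) = t by omega,
    show j + 1 + t - j = t + 1 by omega, qFact_succ (j + 1 + t), qFact_succ t]
  have := qFact_ne_zero t
  have := qInt_ne_zero (Nat.succ_ne_zero t)
  field_simp

lemma qChoose_mul_qInt {n j : ℕ} (h : j ≤ n) :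
    qChoose n j * qInt (n + 1) = qChoose (n + 1) (j + 1) * qInt (j + 1) := by
  rw [qChoose_of_le h, qChoose_of_le (by omega), show n + 1 - (j + 1) = n - j by omega,
    qFact_succ n, qFact_succ j]
  have := qFact_ne_zero j
  have := qFact_ne_zero (n - j)
  have := qInt_ne_zero (Nat.succ_ne_zero j)
  field_simp

lemma qChoose_succ_succ (n j : ℕ) :
    qChoose (n + 1) (j + 1) = qChoose n (j + 1) + qq ^ (n - j) * qChoose n j := by
  rcases le_or_gt j n with h | h
  · have hsum : qInt (n + 1) = qInt (n - j) + qq ^ (n - j) * qInt (j + 1) := by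
      rw [← qInt_add, show n - j + (j + 1) = n + 1 by omega]
    refine mul_right_cancel₀ (qInt_ne_zero n.succ_ne_zero) ?_
    rw [add_mul, mul_assoc, qChoose_succ_mul_qInt h, qChoose_mul_qInt h, hsum]
    ring
  · simp [qChoose_of_lt, h, qChoose_of_lt (h.trans j.lt_succ_self)]

lemma qChoose_succ_succ' (n j : ℕ) :
    qChoose (n + 1) (j + 1) = qq ^ (j + 1) * qChoose n (j + 1) + qChoose n j := by
  rcases le_or_gt j n with h | h
  · have hsum : qInt (n + 1) = qInt (j + 1) + qq ^ (j + 1) * qInt (n - j) := by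
      rw [← qInt_add, show j + 1 + (n - j) = n + 1 by omega]
    refine mul_right_cancel₀ (qInt_ne_zero n.succ_ne_zero) ?_
    rw [add_mul, mul_assoc, qChoose_succ_mul_qInt h, qChoose_mul_qInt h, hsum]
    ring
  · simp [qChoose_of_lt, h, qChoose_of_lt (h.trans j.lt_succ_self)]

noncomputable def altTerm (e c a l j : ℕ) : RatFunc ℚ :=
  (-1) ^ j * qq ^ (j + e).choose 2 * qChoose (2 * l + c) l * qChoose (a + l) j

noncomputable def altSum (e c a m : ℕ) : RatFunc ℚ :=
  ∑ p ∈ antidiagonal m, altTerm e c a p.1 p.2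

lemma altSum_succ_left_eq_add (e c a m : ℕ) :
    altSum (e + 1) (c + 1) a (m + 1)
      = altSum (e + 1) c a (m + 1) + qq ^ (m + e + c + 2) * altSum e (c + 2) (a + 1) m := by
  simp only [altSum, Nat.sum_antidiagonal_succ, mul_sum]
  rw [add_assoc, ← sum_add_distrib]
  congr 1
  · simp [altTerm]
  refine sum_congr rfl fun ⟨l, j⟩ hp => ?_
  simp only [HasAntidiagonal.mem_antidiagonal] at hp
  have hpow : qq ^ (j + (e + 1)).choose 2 * qq ^ (l + c + 2)
      = qq ^ (m + e + c + 2) * qq ^ (j + e).choose 2 := by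
    rw [← pow_add, ← pow_add, ← add_assoc j e 1, Nat.succ_choose_two]
    congr 1
    omega
  simp only [altTerm]
  rw [show 2 * (l + 1) + (c + 1) = (2 * l + c + 2) + 1 by ring, qChoose_succ_succ,
    show 2 * l + c + 2 - l = l + c + 2 by omega, show 2 * (l + 1) + c = 2 * l + c + 2 by ring,
    show 2 * l + (c + 2) = 2 * l + c + 2 by ring, show a + (l + 1) = a + 1 + l by ring]
  linear_combination (-1) ^ j * qChoose (2 * l + c + 2) l * qChoose (a + 1 + l) j * hpow

lemma altSum_succ_left_eq_add' (e c a m : ℕ) :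
    altSum (e + 1) (c + 1) a (m + 1)
      = qq ^ (m + e + 1) * altSum e c a (m + 1) + altSum (e + 1) (c + 2) (a + 1) m := by
  simp only [altSum, Nat.sum_antidiagonal_succ, mul_add, mul_sum]
  rw [add_assoc, ← sum_add_distrib]
  congr 1
  · simp only [altTerm, mul_zero, zero_add, qChoose_zero_right, mul_one]
    rw [← add_assoc, Nat.succ_choose_two, pow_add]
    ring
  refine sum_congr rfl fun ⟨l, j⟩ hp => ?_
  simp only [HasAntidiagonal.mem_antidiagonal] at hp
  have hpow : qq ^ (j + (e + 1)).choose 2 * qq ^ (l + 1)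
      = qq ^ (m + e + 1) * qq ^ (j + e).choose 2 := by
    rw [← pow_add, ← pow_add, ← add_assoc j e 1, Nat.succ_choose_two]
    congr 1
    omega
  simp only [altTerm]
  rw [show 2 * (l + 1) + (c + 1) = (2 * l + c + 2) + 1 by ring, qChoose_succ_succ',
    show 2 * (l + 1) + c = 2 * l + c + 2 by ring, show 2 * l + (c + 2) = 2 * l + c + 2 by ring,
    show a + (l + 1) = a + 1 + l by ring]
  linear_combination (-1) ^ j * qChoose (2 * l + c + 2) (l + 1) * qChoose (a + 1 + l) j * hpow

lemma altSum_succ_right_eq_add (e c a m : ℕ) :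
    altSum (e + 1) c a (m + 1)
      = altSum (e + 1) c (a + 1) (m + 1) + qq ^ (m + a + 2 * e + 1) * altSum e c a m := by
  simp only [altSum, Nat.sum_antidiagonal_succ', mul_sum]
  rw [add_assoc, ← sum_add_distrib]
  congr 1
  · simp [altTerm]
  refine sum_congr rfl fun ⟨l, j⟩ hp => ?_
  simp only [HasAntidiagonal.mem_antidiagonal] at hp
  simp only [altTerm]
  rw [show a + 1 + l = (a + l) + 1 by ring, qChoose_succ_succ]
  rcases le_or_gt j (a + l) with h | h
  · have hpow : qq ^ (j + 1 + (e + 1)).choose 2 * qq ^ (a + l - j)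
        = qq ^ (m + a + 2 * e + 1) * qq ^ (j + e).choose 2 := by
      rw [← pow_add, ← pow_add, show j + 1 + (e + 1) = j + e + 1 + 1 by ring,
        Nat.succ_choose_two, Nat.succ_choose_two]
      congr 1
      omega
    rw [pow_succ]
    linear_combination (-1) ^ j * qChoose (2 * l + c) l * qChoose (a + l) j * hpow
  · simp [qChoose_of_lt, h, qChoose_of_lt (h.trans j.lt_succ_self)]

lemma altSum_succ_right_eq_add' (e c a m : ℕ) :
    altSum (e + 1) c a (m + 1)
      = qq ^ e * (altSum e c (a + 1) (m + 1) + altSum (e + 1) c a m) := by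
  simp only [altSum, Nat.sum_antidiagonal_succ', mul_add, mul_sum]
  rw [add_assoc, ← sum_add_distrib]
  congr 1
  · simp only [altTerm, pow_zero, qChoose_zero_right, mul_one, one_mul, zero_add]
    rw [Nat.succ_choose_two, pow_add]
    ring
  refine sum_congr rfl fun ⟨l, j⟩ _ => ?_
  simp only [altTerm]
  rw [show a + 1 + l = (a + l) + 1 by ring, qChoose_succ_succ',
    show j + 1 + (e + 1) = j + e + 1 + 1 by ring, show j + (e + 1) = j + e + 1 by ring,
    show j + 1 + e = j + e + 1 by ring, Nat.succ_choose_two (j + e + 1)]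
  ring

theorem altSum_diag (m c : ℕ) :
    altSum 0 c (m + c) m = qq ^ (m * (m + c)) ∧ altSum 1 c (m + c) m = 1 := by
  induction m generalizing c with
  | zero => simp [altSum, altTerm]
  | succ m ih =>
    obtain ⟨hpow₂, hone₂⟩ := ih (c + 2)
    obtain ⟨hpow, hone⟩ := ih c
    have hleft := (altSum_succ_left_eq_add 0 c (m + 1 + c) m).symm.trans
      (altSum_succ_left_eq_add' 0 c (m + 1 + c) m)
    have hright := (altSum_succ_right_eq_add 0 c (m + c) m).symm.trans
      (altSum_succ_right_eq_add' 0 c (m + c) m)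
    rw [show m + 1 + c + 1 = m + (c + 2) by ring, hpow₂, hone₂] at hleft
    rw [hpow, hone, show m + c + 1 = m + 1 + c by ring] at hright
    have hpow_succ : altSum 0 c (m + 1 + c) (m + 1) = qq ^ ((m + 1) * (m + 1 + c)) := by
      refine mul_right_cancel₀ (sub_ne_zero.2 (qq_pow_ne_one (n := m + 1) (by omega))) ?_
      linear_combination hright - hleft
    exact ⟨hpow_succ, by linear_combination hright + hpow_succ⟩

noncomputable def qCatalan (k l : ℕ) : RatFunc ℚ :=
  qInt k / qInt (2 * l + k) * qChoose (2 * l + k) l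

lemma qCatalan_zero {k : ℕ} (hk : k ≠ 0) : qCatalan k 0 = 1 := by
  rw [qCatalan, mul_zero, zero_add, div_self (qInt_ne_zero hk), qChoose_zero_right, one_mul]

lemma qCatalan_ne_zero {k : ℕ} (hk : k ≠ 0) (l : ℕ) : qCatalan k l ≠ 0 :=
  mul_ne_zero (div_ne_zero (qInt_ne_zero hk) (qInt_ne_zero (by omega))) (qChoose_ne_zero (by omega))

lemma qCatalan_succ (c l : ℕ) :
    qCatalan (c + 1) (l + 1)
      = qChoose (2 * (l + 1) + c) (l + 1) - qq ^ (c + 1) * qChoose (2 * l + (c + 2)) l := by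
  have hn := qInt_ne_zero (show 2 * l + c + 2 + 1 ≠ 0 by omega)
  have hsum : qInt (2 * l + c + 2 - l) = qInt (c + 1) + qq ^ (c + 1) * qInt (l + 1) := by
    rw [← qInt_add, show c + 1 + (l + 1) = 2 * l + c + 2 - l by omega]
  have h₁ := qChoose_succ_mul_qInt (show l ≤ 2 * l + c + 2 by omega)
  have h₂ := qChoose_mul_qInt (show l ≤ 2 * l + c + 2 by omega)
  rw [qCatalan, show 2 * (l + 1) + (c + 1) = 2 * l + c + 2 + 1 by ring,
    show 2 * (l + 1) + c = 2 * l + c + 2 by ring, show 2 * l + (c + 2) = 2 * l + c + 2 by ring]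
  refine mul_right_cancel₀ hn ?_
  rw [sub_mul, mul_assoc, h₁, mul_assoc, h₂, hsum]
  field_simp
  ring

lemma sum_qCatalan_eq_altSum_sub (c a m : ℕ) :
    ∑ p ∈ antidiagonal (m + 1),
        (-1) ^ p.2 * qq ^ p.2.choose 2 * qCatalan (c + 1) p.1 * qChoose (a + p.1) p.2
      = altSum 0 c a (m + 1) - qq ^ (c + 1) * altSum 0 (c + 2) (a + 1) m := by
  simp only [altSum, Nat.sum_antidiagonal_succ, mul_sum]
  rw [add_sub_assoc, ← sum_sub_distrib]
  congr 1
  · simp [altTerm, qCatalan_zero]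
  refine sum_congr rfl fun p _ => ?_
  rw [qCatalan_succ, altTerm, altTerm, add_zero, show a + 1 + p.1 = a + (p.1 + 1) by ring]
  ring

lemma sum_qCatalan_eq_zero (c m : ℕ) :
    ∑ p ∈ antidiagonal (m + 1),
        (-1) ^ p.2 * qq ^ p.2.choose 2 * qCatalan (c + 1) p.1 * qChoose (m + 1 + c + p.1) p.2
      = 0 := by
  rw [sum_qCatalan_eq_altSum_sub, show m + 1 + c + 1 = m + (c + 2) by ring,
    (altSum_diag (m + 1) c).1, (altSum_diag m (c + 2)).1, ← pow_add, sub_eq_zero]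
  congr 1
  ring

noncomputable def hessEntry (k i j : ℕ) : RatFunc ℚ :=
  if j ≤ i + 1 then
    qq ^ (((i : ℤ) - (j : ℤ)) * ((i : ℤ) - (j : ℤ) - 1) / 2).toNat * qChoose (i + j + k) (i + 1 - j)
  else 0

lemma hessEntry_of_lt (k : ℕ) {i j : ℕ} (h : i + 1 < j) : hessEntry k i j = 0 := if_neg (by omega)

lemma hessEntry_succ (k i : ℕ) : hessEntry k i (i + 1) = qq := by
  rw [hessEntry, if_pos le_rfl, Nat.sub_self, qChoose_zero_right, mul_one]
  norm_num

lemma toNat_mul_sub_one_div_two (j : ℕ) : ((j : ℤ) * ((j : ℤ) - 1) / 2).toNat = j.choose 2 := by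
  rw [Nat.choose_two_right]
  rcases j with _ | j
  · rfl
  · have h : ((j + 1 : ℕ) : ℤ) * (((j + 1 : ℕ) : ℤ) - 1) = (((j + 1) * j : ℕ) : ℤ) := by
      push_cast
      ring
    rw [h, Nat.add_sub_cancel]
    omega

lemma hessEntry_add (k l j : ℕ) :
    hessEntry k (l + j) l = qq ^ j.choose 2 * qChoose (2 * l + j + k) (j + 1) := by
  rw [hessEntry, if_pos (by omega), show l + j + 1 - l = j + 1 by omega,
    show l + j + l + k = 2 * l + j + k by ring]
  push_cast
  rw [add_sub_cancel_left, toNat_mul_sub_one_div_two]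

lemma sum_hessEntry_mul_qCatalan {k : ℕ} (hk : k ≠ 0) (i : ℕ) :
    ∑ l ∈ range (i + 1), (-qq) ^ (i - l) * (hessEntry k i l * qCatalan k l)
      = qCatalan k (i + 1) := by
  obtain ⟨c, rfl⟩ : ∃ c, k = c + 1 := ⟨k - 1, by omega⟩
  have hzero := sum_qCatalan_eq_zero c i
  rw [Nat.sum_antidiagonal_succ'] at hzero
  have hrange := Nat.sum_antidiagonal_eq_sum_range_succ
    (fun l j => (-qq) ^ j * (hessEntry (c + 1) i l * qCatalan (c + 1) l)) i
  beta_reduce at hrange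
  have hterm : ∀ p ∈ antidiagonal i, (-qq) ^ p.2 * (hessEntry (c + 1) i p.1 * qCatalan (c + 1) p.1)
      = -((-1) ^ (p.2 + 1) * qq ^ (p.2 + 1).choose 2 * qCatalan (c + 1) p.1 *
          qChoose (i + 1 + c + p.1) (p.2 + 1)) := by
    rintro ⟨l, j⟩ hp
    simp only [HasAntidiagonal.mem_antidiagonal] at hp
    subst hp
    rw [hessEntry_add, Nat.succ_choose_two, show l + j + 1 + c + l = 2 * l + j + (c + 1) by ring]
    ring
  rw [← hrange, sum_congr rfl hterm, sum_neg_distrib]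
  simp only [pow_zero, Nat.choose_zero_succ, qChoose_zero_right, one_mul, mul_one] at hzero
  linear_combination -hzero

theorem stmt_15 (n k : ℕ) (hk : 1 ≤ k) :
    Matrix.det (Matrix.of fun i j : Fin n =>
        if (j : ℕ) ≤ (i : ℕ) + 1 then
          qq ^ ((((i : ℕ) : ℤ) - ((j : ℕ) : ℤ)) * (((i : ℕ) : ℤ) - ((j : ℕ) : ℤ) - 1) / 2).toNat *
            qChoose ((i : ℕ) + (j : ℕ) + k) ((i : ℕ) + 1 - (j : ℕ))
        else 0)
      = (qInt k / qInt (2 * n + k)) * qChoose (2 * n + k) n := by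
  have hk₀ : k ≠ 0 := by omega
  have h := det_of_hessenberg (fun _ _ => hessEntry_of_lt k) (hessEntry_succ k)
    (sum_hessEntry_mul_qCatalan hk₀) n (fun i _ => qCatalan_ne_zero hk₀ i)
  rwa [qCatalan_zero hk₀, one_mul] at h
end
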